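/- arXiv:1506.08420 — 6 statements merged into one kernel-verified Lean document; each statement's English description precedes it below -/
import Mathlib

section
/- Let G be a non-commutative directed po-group. The following are equivalent: (i) the right wreath product ℤ ⃗wr G satisfies RDP₁; (ii) the left wreath product ℤ ⃖wr G satisfies RDP₁; (iii) G is linearly ordered. In any such case, the right and left wreath products are linearly ordered groups. -/
/-! Riesz decomposition properties relative to explicit multiplication `mul`,
unit `one`, and order relation `le`, together with the lexicographic product
order and (unrestricted/restricted, right/left) wreath products of po-groups. -/

/-- The Riesz decomposition property (RDP). -/
def RDPWith {M : Type*} (mul : M → M → M) (one : M) (le : M → M → Prop) : Prop :=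
  ∀ a₁ a₂ b₁ b₂ : M,
    le one a₁ → le one a₂ → le one b₁ → le one b₂ → mul a₁ a₂ = mul b₁ b₂ →
    ∃ c₁₁ c₁₂ c₂₁ c₂₂ : M,
      le one c₁₁ ∧ le one c₁₂ ∧ le one c₂₁ ∧ le one c₂₂ ∧
      a₁ = mul c₁₁ c₁₂ ∧ a₂ = mul c₂₁ c₂₂ ∧ b₁ = mul c₁₁ c₂₁ ∧ b₂ = mul c₁₂ c₂₂

/-- The Riesz decomposition property RDP₁ (commutativity below the
cross-diagonal entries `c₁₂`, `c₂₁`). -/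
def RDP1With {M : Type*} (mul : M → M → M) (one : M) (le : M → M → Prop) : Prop :=
  ∀ a₁ a₂ b₁ b₂ : M,
    le one a₁ → le one a₂ → le one b₁ → le one b₂ → mul a₁ a₂ = mul b₁ b₂ →
    ∃ c₁₁ c₁₂ c₂₁ c₂₂ : M,
      le one c₁₁ ∧ le one c₁₂ ∧ le one c₂₁ ∧ le one c₂₂ ∧
      a₁ = mul c₁₁ c₁₂ ∧ a₂ = mul c₂₁ c₂₂ ∧ b₁ = mul c₁₁ c₂₁ ∧ b₂ = mul c₁₂ c₂₂ ∧
      (∀ x y : M, le one x → le x c₁₂ → le one y → le y c₂₁ → mul x y = mul y x)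

/-- The Riesz decomposition property RDP₂ (the infimum of `c₁₂` and `c₂₁`
exists and equals `one`; the last clause, together with `le one c₁₂` and
`le one c₂₁`, says exactly that `one` is the greatest lower bound). -/
def RDP2With {M : Type*} (mul : M → M → M) (one : M) (le : M → M → Prop) : Prop :=
  ∀ a₁ a₂ b₁ b₂ : M,
    le one a₁ → le one a₂ → le one b₁ → le one b₂ → mul a₁ a₂ = mul b₁ b₂ →
    ∃ c₁₁ c₁₂ c₂₁ c₂₂ : M,
      le one c₁₁ ∧ le one c₁₂ ∧ le one c₂₁ ∧ le one c₂₂ ∧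
      a₁ = mul c₁₁ c₁₂ ∧ a₂ = mul c₂₁ c₂₂ ∧ b₁ = mul c₁₁ c₂₁ ∧ b₂ = mul c₁₂ c₂₂ ∧
      (∀ z : M, le z c₁₂ → le z c₂₁ → le z one)

/-- RDP for the sub-po-group carried by the subset `S`. -/
def RDPWithOn {M : Type*} (S : Set M) (mul : M → M → M) (one : M)
    (le : M → M → Prop) : Prop :=
  ∀ a₁ a₂ b₁ b₂ : M, a₁ ∈ S → a₂ ∈ S → b₁ ∈ S → b₂ ∈ S →
    le one a₁ → le one a₂ → le one b₁ → le one b₂ → mul a₁ a₂ = mul b₁ b₂ →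
    ∃ c₁₁ c₁₂ c₂₁ c₂₂ : M, c₁₁ ∈ S ∧ c₁₂ ∈ S ∧ c₂₁ ∈ S ∧ c₂₂ ∈ S ∧
      le one c₁₁ ∧ le one c₁₂ ∧ le one c₂₁ ∧ le one c₂₂ ∧
      a₁ = mul c₁₁ c₁₂ ∧ a₂ = mul c₂₁ c₂₂ ∧ b₁ = mul c₁₁ c₂₁ ∧ b₂ = mul c₁₂ c₂₂

/-- RDP₁ for the sub-po-group carried by the subset `S`. -/
def RDP1WithOn {M : Type*} (S : Set M) (mul : M → M → M) (one : M)
    (le : M → M → Prop) : Prop :=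
  ∀ a₁ a₂ b₁ b₂ : M, a₁ ∈ S → a₂ ∈ S → b₁ ∈ S → b₂ ∈ S →
    le one a₁ → le one a₂ → le one b₁ → le one b₂ → mul a₁ a₂ = mul b₁ b₂ →
    ∃ c₁₁ c₁₂ c₂₁ c₂₂ : M, c₁₁ ∈ S ∧ c₁₂ ∈ S ∧ c₂₁ ∈ S ∧ c₂₂ ∈ S ∧
      le one c₁₁ ∧ le one c₁₂ ∧ le one c₂₁ ∧ le one c₂₂ ∧
      a₁ = mul c₁₁ c₁₂ ∧ a₂ = mul c₂₁ c₂₂ ∧ b₁ = mul c₁₁ c₂₁ ∧ b₂ = mul c₁₂ c₂₂ ∧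
      (∀ x y : M, x ∈ S → y ∈ S →
        le one x → le x c₁₂ → le one y → le y c₂₁ → mul x y = mul y x)

/-- RDP₂ for the sub-po-group carried by the subset `S`. -/
def RDP2WithOn {M : Type*} (S : Set M) (mul : M → M → M) (one : M)
    (le : M → M → Prop) : Prop :=
  ∀ a₁ a₂ b₁ b₂ : M, a₁ ∈ S → a₂ ∈ S → b₁ ∈ S → b₂ ∈ S →
    le one a₁ → le one a₂ → le one b₁ → le one b₂ → mul a₁ a₂ = mul b₁ b₂ →
    ∃ c₁₁ c₁₂ c₂₁ c₂₂ : M, c₁₁ ∈ S ∧ c₁₂ ∈ S ∧ c₂₁ ∈ S ∧ c₂₂ ∈ S ∧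
      le one c₁₁ ∧ le one c₁₂ ∧ le one c₂₁ ∧ le one c₂₂ ∧
      a₁ = mul c₁₁ c₁₂ ∧ a₂ = mul c₂₁ c₂₂ ∧ b₁ = mul c₁₁ c₂₁ ∧ b₂ = mul c₁₂ c₂₂ ∧
      (∀ z : M, z ∈ S → le z c₁₂ → le z c₂₁ → le z one)

/-- The Riesz interpolation property (RIP). -/
def RIPWith {M : Type*} (le : M → M → Prop) : Prop :=
  ∀ a₁ a₂ b₁ b₂ : M, le a₁ b₁ → le a₁ b₂ → le a₂ b₁ → le a₂ b₂ →
    ∃ c : M, le a₁ c ∧ le a₂ c ∧ le c b₁ ∧ le c b₂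

/-- RIP for the subposet carried by the subset `S`. -/
def RIPWithOn {M : Type*} (S : Set M) (le : M → M → Prop) : Prop :=
  ∀ a₁ a₂ b₁ b₂ : M, a₁ ∈ S → a₂ ∈ S → b₁ ∈ S → b₂ ∈ S →
    le a₁ b₁ → le a₁ b₂ → le a₂ b₁ → le a₂ b₂ →
    ∃ c ∈ S, le a₁ c ∧ le a₂ c ∧ le c b₁ ∧ le c b₂

/-- The lexicographic order on a product: `(g₁,h₁) ≤ (g₂,h₂)` iff `g₁ < g₂`,
or `g₁ = g₂` and `h₁ ≤ h₂`. -/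
def lexLE {A B : Type*} [PartialOrder A] [LE B] (p q : A × B) : Prop :=
  p.1 < q.1 ∨ (p.1 = q.1 ∧ p.2 ≤ q.2)

/-- A poset is an antilattice if only comparable pairs of elements have a
join or a meet. -/
def IsAntilattice (G : Type*) [PartialOrder G] : Prop :=
  ∀ a b : G, ((∃ s, IsLUB {a, b} s) ∨ (∃ s, IsGLB {a, b} s)) → a ≤ b ∨ b ≤ a

/-- Multiplication of the unrestricted Wreath product `A Wr G`:
`(n,⟨g_a⟩)·(m,⟨h_a⟩) = (n·m, ⟨g_a·h_{a·n}⟩)`. -/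
def wrMul {A G : Type*} [Mul A] [Mul G] (p q : A × (A → G)) : A × (A → G) :=
  (p.1 * q.1, fun a => p.2 a * q.2 (a * p.1))

/-- The unit of the Wreath product `A Wr G`. -/
def wrOne (A G : Type*) [One A] [One G] : A × (A → G) :=
  (1, fun _ => 1)

/-- The order of the Wreath product `A Wr G`: `(n,⟨g_a⟩) ≤ (m,⟨h_a⟩)` iff
`n < m`, or `n = m` and `g_a ≤ h_a` for all `a`. -/
def wrLE {A G : Type*} [PartialOrder A] [LE G] (p q : A × (A → G)) : Prop :=
  p.1 < q.1 ∨ (p.1 = q.1 ∧ ∀ a, p.2 a ≤ q.2 a)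

/-- The carrier of the restricted Wreath product `A wr G`: elements whose
second component equals `1` at all but finitely many places. -/
def wrS (A G : Type*) [One G] : Set (A × (A → G)) :=
  {p | (Function.mulSupport p.2).Finite}

/-- Multiplication of the wreath products over `ℤ`:
`(n,⟨g_i⟩)·(m,⟨h_i⟩) = (n+m, ⟨g_i·h_{i+n}⟩)`. -/
def zwrMul {G : Type*} [Mul G] (p q : ℤ × (ℤ → G)) : ℤ × (ℤ → G) :=
  (p.1 + q.1, fun i => p.2 i * q.2 (i + p.1))

/-- The unit of the wreath products over `ℤ`. -/
def zwrOne (G : Type*) [One G] : ℤ × (ℤ → G) :=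
  (0, fun _ => 1)

/-- The inverse in the wreath products over `ℤ`. -/
def zwrInv {G : Type*} [Inv G] (p : ℤ × (ℤ → G)) : ℤ × (ℤ → G) :=
  (-p.1, fun i => (p.2 (i - p.1))⁻¹)

/-- The carrier of the (restricted) wreath products over `ℤ`: elements with
`g_i = 1` for all but finitely many `i`. -/
def zwrS (G : Type*) [One G] : Set (ℤ × (ℤ → G)) :=
  {p | (Function.mulSupport p.2).Finite}

/-- Strict positivity in the right wreath product `ℤ →wr G`: either `n > 0`,
or `n = 0`, some `g_i ≠ 1`, and `g_j > 1` where `j` is the greatest index `i`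
with `g_i ≠ 1`. -/
def rPos {G : Type*} [One G] [LT G] (p : ℤ × (ℤ → G)) : Prop :=
  0 < p.1 ∨ (p.1 = 0 ∧ ∃ j : ℤ, 1 < p.2 j ∧ ∀ i : ℤ, j < i → p.2 i = 1)

/-- Strict positivity in the left wreath product `ℤ ←wr G`: either `n > 0`,
or `n = 0`, some `g_i ≠ 1`, and `g_j > 1` where `j` is the least index `i`
with `g_i ≠ 1`. -/
def lPos {G : Type*} [One G] [LT G] (p : ℤ × (ℤ → G)) : Prop :=
  0 < p.1 ∨ (p.1 = 0 ∧ ∃ j : ℤ, 1 < p.2 j ∧ ∀ i : ℤ, i < j → p.2 i = 1)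

/-- The order of the right wreath product `ℤ →wr G`. -/
def rLE {G : Type*} [Group G] [LT G] (p q : ℤ × (ℤ → G)) : Prop :=
  p = q ∨ rPos (zwrMul (zwrInv p) q)

/-- The order of the left wreath product `ℤ ←wr G`. -/
def lLE {G : Type*} [Group G] [LT G] (p q : ℤ × (ℤ → G)) : Prop :=
  p = q ∨ lPos (zwrMul (zwrInv p) q)

/-! Write `t = (1, 1)` for the shift and `s` for the element carrying `g` at one coordinate.
Whatever `g` is, `t * s` and `s * t` are positive, and an RDP₁ decomposition of
`(t * s) * t = t * (s * t)` satisfies `c₁₂ = c₂₁ * s`. If `c₁₂` and `c₂₁` were both strictly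
positive, both would lie above every positive element concentrated at a coordinate far enough
down, so RDP₁ would make the strictly positive elements of `G` commute; a directed po-group is
generated by its positive cone, so `G` would be commutative. Hence `c₂₁ = 1` and `s = c₁₂ ≥ 1`,
or `c₁₂ = 1` and `s⁻¹ = c₂₁ ≥ 1`: `g` is comparable with `1`.
Conversely, if `G` is linearly ordered, the lexicographic order of the wreath product is total,
and a totally ordered group has RDP₁ with one cross term equal to `1`. -/

theorem mul_comm_of_one_lt_mul_comm {G : Type*} [Group G] [PartialOrder G] [MulLeftMono G]
    (hdir : ∀ x y : G, ∃ z, x ≤ z ∧ y ≤ z)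
    (h : ∀ a b : G, 1 < a → 1 < b → a * b = b * a) (x y : G) : x * y = y * x := by
  have hpos : ∀ a b : G, 1 ≤ a → 1 ≤ b → Commute a b := by
    intro a b ha hb
    rcases ha.eq_or_lt with rfl | ha
    · exact Commute.one_left b
    rcases hb.eq_or_lt with rfl | hb
    · exact Commute.one_right a
    exact h a b ha hb
  have hdiff : ∀ x : G, ∃ a b : G, 1 ≤ a ∧ 1 ≤ b ∧ x = a * b⁻¹ := fun x =>
    let ⟨z, hxz, hz⟩ := hdir x 1
    ⟨z, x⁻¹ * z, hz, le_inv_mul_iff_le.2 hxz, by group⟩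
  obtain ⟨a, b, ha, hb, rfl⟩ := hdiff x
  obtain ⟨c, d, hc, hd, rfl⟩ := hdiff y
  have hac := (hpos a c ha hc).mul_right (hpos a d ha hd).inv_right
  have hbc := (hpos b c hb hc).mul_right (hpos b d hb hd).inv_right
  exact (hac.mul_left hbc.inv_left).eq

theorem le_total_iff_one_le_or_le_one {G : Type*} [Group G] [LE G] [MulLeftMono G] :
    (∀ a b : G, a ≤ b ∨ b ≤ a) ↔ ∀ a : G, 1 ≤ a ∨ a ≤ 1 :=
  ⟨fun h a => h 1 a, fun h a b => (h (a⁻¹ * b)).imp le_inv_mul_iff_le.1 inv_mul_le_one_iff.1⟩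

theorem Set.Finite.exists_rel_maximal {α : Type*} {r : α → α → Prop}
    [IsStrictOrder α r] {s : Set α} (hs : s.Finite) (hne : s.Nonempty) :
    ∃ j ∈ s, ∀ i, r j i → i ∉ s := by
  obtain ⟨⟨j, hj⟩, -, hmax⟩ := (hs.wellFoundedOn (r := Function.swap r)).has_min Set.univ
    ⟨⟨_, hne.some_mem⟩, trivial⟩
  exact ⟨j, hj, fun i hji hi => hmax ⟨i, hi⟩ trivial hji⟩

section ConeOrder

variable {M : Type*} [Group M]

def coneLE (P : M → Prop) (p q : M) : Prop :=
  p = q ∨ P (p⁻¹ * q)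

variable {P : M → Prop}

theorem coneLE_one_left {p : M} : coneLE P 1 p ↔ p = 1 ∨ P p := by
  simp only [coneLE, inv_one, one_mul, eq_comm]

theorem eq_one_of_coneLE_of_coneLE (hasymm : ∀ d, P d → ¬ P d⁻¹) {p : M}
    (h₁ : coneLE P 1 p) (h₂ : coneLE P p 1) : p = 1 := by
  rcases coneLE_one_left.1 h₁ with h | hp
  · exact h
  rcases h₂ with h | h
  · exact h
  · exact absurd (by simpa using h) (hasymm p hp)

theorem coneLE_total {H : Subgroup M} (htri : ∀ d ∈ H, d = 1 ∨ P d ∨ P d⁻¹) {p q : M}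
    (hp : p ∈ H) (hq : q ∈ H) : coneLE P p q ∨ coneLE P q p := by
  rcases htri _ (H.mul_mem (H.inv_mem hp) hq) with h | h | h
  · exact Or.inl (Or.inl (inv_mul_eq_one.1 h))
  · exact Or.inl (Or.inr h)
  · exact Or.inr (Or.inr (by simpa using h))

theorem rdp1WithOn_coneLE {H : Subgroup M} (hasymm : ∀ d, P d → ¬ P d⁻¹)
    (htri : ∀ d ∈ H, d = 1 ∨ P d ∨ P d⁻¹) :
    RDP1WithOn (H : Set M) (· * ·) 1 (coneLE P) := by
  have one_le_inv_mul {a b : M} (h : coneLE P a b) : coneLE P 1 (a⁻¹ * b) :=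
    coneLE_one_left.2 (h.imp (fun h => by simp [h]) id)
  intro a₁ a₂ b₁ b₂ ha₁ ha₂ hb₁ hb₂ h1a₁ h1a₂ h1b₁ h1b₂ (he : a₁ * a₂ = b₁ * b₂)
  rcases coneLE_total htri ha₁ hb₁ with hab | hba
  · refine ⟨a₁, 1, a₁⁻¹ * b₁, b₂, ha₁, H.one_mem, H.mul_mem (H.inv_mem ha₁) hb₁, hb₂, h1a₁,
      Or.inl rfl, one_le_inv_mul hab, h1b₂, (mul_one _).symm, ?_, (mul_inv_cancel_left _ _).symm,
      (one_mul _).symm, ?_⟩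
    · show a₂ = a₁⁻¹ * b₁ * b₂
      rw [mul_assoc, ← he, inv_mul_cancel_left]
    · intro x y _ _ h1x hx _ _
      obtain rfl := eq_one_of_coneLE_of_coneLE hasymm h1x hx
      exact (Commute.one_left y).eq
  · refine ⟨b₁, b₁⁻¹ * a₁, 1, a₂, hb₁, H.mul_mem (H.inv_mem hb₁) ha₁, H.one_mem, ha₂, h1b₁,
      one_le_inv_mul hba, Or.inl rfl, h1a₂, (mul_inv_cancel_left _ _).symm, (one_mul _).symm,
      (mul_one _).symm, ?_, ?_⟩
    · show b₂ = b₁⁻¹ * a₁ * a₂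
      rw [mul_assoc, he, inv_mul_cancel_left]
    · intro x y _ _ _ _ h1y hy
      obtain rfl := eq_one_of_coneLE_of_coneLE hasymm h1y hy
      exact (Commute.one_right x).eq

end ConeOrder

/-- With the group structure below, `rLE` and `lLE` are definitionally
`coneLE (lexPos (· < ·))` and `coneLE (lexPos (· > ·))`. -/
def IntWreath (G : Type*) := ℤ × (ℤ → G)

namespace IntWreath

variable {G : Type*}

instance [Mul G] : Mul (IntWreath G) := ⟨zwrMul⟩
instance [One G] : One (IntWreath G) := ⟨zwrOne G⟩
instance [Inv G] : Inv (IntWreath G) := ⟨zwrInv⟩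

@[simp] theorem fst_mul [Mul G] (p q : IntWreath G) : (p * q).1 = p.1 + q.1 := rfl
@[simp] theorem snd_mul [Mul G] (p q : IntWreath G) (i : ℤ) :
    (p * q).2 i = p.2 i * q.2 (i + p.1) := rfl
@[simp] theorem fst_one [One G] : (1 : IntWreath G).1 = 0 := rfl
@[simp] theorem snd_one [One G] (i : ℤ) : (1 : IntWreath G).2 i = 1 := rfl
@[simp] theorem fst_inv [Inv G] (p : IntWreath G) : p⁻¹.1 = -p.1 := rfl
@[simp] theorem snd_inv [Inv G] (p : IntWreath G) (i : ℤ) : p⁻¹.2 i = (p.2 (i - p.1))⁻¹ := rfl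

@[ext] theorem ext {p q : IntWreath G} (h₁ : p.1 = q.1) (h₂ : ∀ i, p.2 i = q.2 i) : p = q :=
  Prod.ext h₁ (funext h₂)

variable [Group G]

instance : Group (IntWreath G) :=
  Group.ofLeftAxioms (fun _ _ _ => by ext <;> simp [add_assoc, mul_assoc])
    (fun _ => by ext <;> simp) (fun _ => by ext <;> simp [sub_eq_add_neg])

variable (G) in
def finSupp : Subgroup (IntWreath G) where
  carrier := zwrS G
  one_mem' := show (Function.mulSupport fun _ => (1 : G)).Finite by simp
  mul_mem' {p q} (hp : (Function.mulSupport p.2).Finite) (hq : (Function.mulSupport q.2).Finite) :=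
    show (Function.mulSupport fun i => p.2 i * q.2 (i + p.1)).Finite from
      (hp.union (hq.preimage (add_left_injective p.1).injOn)).subset
        (Function.mulSupport_mul _ _)
  inv_mem' {p} (hp : (Function.mulSupport p.2).Finite) :=
    show (Function.mulSupport fun i => (p.2 (i - p.1))⁻¹).Finite from
      (hp.preimage (sub_left_injective (b := p.1)).injOn).subset fun _ hi => inv_ne_one.1 hi

def single (k : ℤ) (g : G) : IntWreath G := (0, Pi.mulSingle k g)

def shift : IntWreath G := (1, 1)

theorem single_mem (k : ℤ) (g : G) : single k g ∈ finSupp G :=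
  (Set.finite_singleton k).subset Pi.mulSupport_mulSingle_subset

theorem shift_mem : (shift : IntWreath G) ∈ finSupp G :=
  show (Function.mulSupport fun _ : ℤ => (1 : G)).Finite by simp

@[simp] theorem fst_single (k : ℤ) (g : G) : (single k g).1 = 0 := rfl
@[simp] theorem snd_single (k : ℤ) (g : G) : (single k g).2 = Pi.mulSingle k g := rfl
@[simp] theorem fst_shift : (shift : IntWreath G).1 = 1 := rfl

theorem single_mul_single (k : ℤ) (a b : G) : single k a * single k b = single k (a * b) := by
  ext i <;> simp [Pi.mulSingle_mul]

theorem single_inv (k : ℤ) (g : G) : (single k g)⁻¹ = single k g⁻¹ := by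
  ext i <;> simp [Pi.mulSingle_inv]

theorem single_injective (k : ℤ) : Function.Injective (single (G := G) k) :=
  fun _ _ h => Pi.mulSingle_injective k (congrArg Prod.snd h)

theorem single_eq_one {k : ℤ} {g : G} : single k g = 1 ↔ g = 1 :=
  (single_injective k).eq_iff' (by ext <;> simp)

section LexOrder

variable [PartialOrder G] {r : ℤ → ℤ → Prop}

def lexPos (r : ℤ → ℤ → Prop) (p : IntWreath G) : Prop :=
  0 < p.1 ∨ (p.1 = 0 ∧ ∃ j, 1 < p.2 j ∧ ∀ i, r j i → p.2 i = 1)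

theorem one_coneLE_of_fst_pos {p : IntWreath G} (h : 0 < p.1) : coneLE (lexPos r) 1 p :=
  coneLE_one_left.2 (Or.inr (Or.inl h))

theorem lexPos_single_iff [Std.Irrefl r] {k : ℤ} {g : G} : lexPos r (single k g) ↔ 1 < g := by
  refine ⟨?_, fun hg => Or.inr ⟨rfl, k, by simpa using hg, fun i hki => ?_⟩⟩
  · rintro (h | ⟨-, j, hj, -⟩)
    · exact absurd h (lt_irrefl 0)
    · by_cases hjk : j = k
      · simpa [hjk] using hj
      · simp [Pi.mulSingle_eq_of_ne hjk] at hj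
  · have hik : i ≠ k := by rintro rfl; exact irrefl i hki
    simp [Pi.mulSingle_eq_of_ne hik]

theorem exists_single_coneLE [Std.Asymm r] {p : IntWreath G} (hp : lexPos r p) :
    ∃ j, ∀ k, r k j → ∀ w : G, coneLE (lexPos r) (single k w) p := by
  rcases hp with hp | ⟨hp0, j, hj, hlead⟩
  · exact ⟨0, fun k _ w => Or.inr (Or.inl (by simpa using hp))⟩
  refine ⟨j, fun k hkj w => Or.inr (Or.inr ⟨by simpa using hp0, j, ?_, fun i hji => ?_⟩)⟩
  · have hjk : j ≠ k := by rintro rfl; exact irrefl j hkj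
    simpa [Pi.mulSingle_eq_of_ne hjk] using hj
  · have hik : i ≠ k := by rintro rfl; exact asymm hkj hji
    simp [Pi.mulSingle_eq_of_ne hik, hlead i hji]

theorem mul_comm_of_commute_below [Std.Asymm r] (hr : ∀ i j, ∃ k, r k i ∧ r k j)
    {p q : IntWreath G} (hp : lexPos r p) (hq : lexPos r q)
    (hcomm : ∀ x y, x ∈ finSupp G → y ∈ finSupp G → coneLE (lexPos r) 1 x →
      coneLE (lexPos r) x p → coneLE (lexPos r) 1 y → coneLE (lexPos r) y q → x * y = y * x)
    {a b : G} (ha : 1 < a) (hb : 1 < b) : a * b = b * a := by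
  obtain ⟨j, hj⟩ := exists_single_coneLE hp
  obtain ⟨j', hj'⟩ := exists_single_coneLE hq
  obtain ⟨k, hkj, hkj'⟩ := hr j j'
  have h := hcomm (single k a) (single k b) (single_mem k a) (single_mem k b)
    (coneLE_one_left.2 (Or.inr (lexPos_single_iff.2 ha))) (hj k hkj a)
    (coneLE_one_left.2 (Or.inr (lexPos_single_iff.2 hb))) (hj' k hkj' b)
  rw [single_mul_single, single_mul_single] at h
  exact single_injective k h

theorem one_le_or_le_one_of_rdp1 [MulLeftMono G] [Std.Asymm r] (hr : ∀ i j, ∃ k, r k i ∧ r k j)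
    (hnc : ¬ ∀ a b : G, 1 < a → 1 < b → a * b = b * a)
    (h : RDP1WithOn (finSupp G : Set (IntWreath G)) (· * ·) 1 (coneLE (lexPos r))) (g : G) :
    1 ≤ g ∨ g ≤ 1 := by
  have one_le_shift : coneLE (lexPos r) 1 (shift : IntWreath G) :=
    one_coneLE_of_fst_pos (by simp)
  obtain ⟨c₁₁, c₁₂, c₂₁, -, -, -, -, -, -, h₁₂, h₂₁, -, ha₁, -, hb₁, -, hcomm⟩ :=
    h (shift * single 1 g) shift shift (single 1 g * shift)
      ((finSupp G).mul_mem shift_mem (single_mem 1 g)) shift_mem shift_mem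
      ((finSupp G).mul_mem (single_mem 1 g) shift_mem)
      (one_coneLE_of_fst_pos (by simp)) one_le_shift one_le_shift
      (one_coneLE_of_fst_pos (by simp)) (mul_assoc _ _ _)
  have hc : c₁₂ = c₂₁ * single 1 g := by
    have ha₁ : shift * single 1 g = c₁₁ * c₁₂ := ha₁
    rw [show shift = c₁₁ * c₂₁ from hb₁, mul_assoc] at ha₁
    exact (mul_left_cancel ha₁).symm
  rcases coneLE_one_left.1 h₂₁ with rfl | hpos₂₁
  · rw [one_mul] at hc
    subst hc
    rcases coneLE_one_left.1 h₁₂ with h | h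
    · exact Or.inl (single_eq_one.1 h).ge
    · exact Or.inl (lexPos_single_iff.1 h).le
  rcases coneLE_one_left.1 h₁₂ with h₁ | hpos₁₂
  · rw [h₁, eq_comm, ← eq_inv_iff_mul_eq_one, single_inv] at hc
    subst hc
    exact Or.inr (one_lt_inv'.1 (lexPos_single_iff.1 hpos₂₁)).le
  · exact absurd (fun a b => mul_comm_of_commute_below hr hpos₁₂ hpos₂₁ hcomm) hnc

theorem lexPos_trichotomy [MulLeftMono G] [IsStrictOrder ℤ r] (htot : ∀ a : G, 1 ≤ a ∨ a ≤ 1)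
    {p : IntWreath G} (hp : p ∈ finSupp G) : p = 1 ∨ lexPos r p ∨ lexPos r p⁻¹ := by
  rcases lt_trichotomy p.1 0 with hneg | hzero | hpos
  · exact Or.inr (Or.inr (Or.inl (by simpa using hneg)))
  · rcases (Function.mulSupport p.2).eq_empty_or_nonempty with hempty | hne
    · exact Or.inl (ext hzero fun i => congrFun (Function.mulSupport_eq_empty_iff.1 hempty) i)
    obtain ⟨j, hj, hlead⟩ := Set.Finite.exists_rel_maximal (r := r) hp hne
    have hlead' : ∀ i, r j i → p.2 i = 1 := fun i hi => Function.notMem_mulSupport.1 (hlead i hi)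
    rcases htot (p.2 j) with h | h
    · exact Or.inr (Or.inl (Or.inr ⟨hzero, j, lt_of_le_of_ne h (Ne.symm hj), hlead'⟩))
    · refine Or.inr (Or.inr (Or.inr ⟨by simp [hzero], j, ?_, fun i hi => ?_⟩))
      · simpa [hzero] using one_lt_inv'.2 (lt_of_le_of_ne h hj)
      · simp [hzero, hlead' i hi]
  · exact Or.inr (Or.inl (Or.inl hpos))

theorem lexPos_asymm [MulLeftMono G] [Std.Trichotomous r] {p : IntWreath G} (hp : lexPos r p) :
    ¬ lexPos r p⁻¹ := by
  rintro (hinv | ⟨hinv0, j', hj', hlead'⟩)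
  · rcases hp with hp | ⟨hp, -⟩ <;> simp only [fst_inv] at hinv <;> omega
  rcases hp with hp | ⟨hp0, j, hj, hlead⟩
  · simp only [fst_inv] at hinv0
    omega
  simp only [snd_inv, hp0, sub_zero] at hj' hlead'
  rcases Std.Trichotomous.rel_or_eq_or_rel_swap (r := r) (a := j) (b := j') with h | rfl | h
  · rw [hlead j' h, inv_one] at hj'
    exact lt_irrefl 1 hj'
  · exact lt_asymm hj (one_lt_inv'.1 hj')
  · rw [inv_eq_one.1 (hlead' j h)] at hj
    exact lt_irrefl 1 hj

theorem rdp1WithOn_coneLE_lexPos_iff [MulLeftMono G] [IsStrictTotalOrder ℤ r]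
    (hr : ∀ i j, ∃ k, r k i ∧ r k j) (hnc : ¬ ∀ a b : G, 1 < a → 1 < b → a * b = b * a) :
    RDP1WithOn (finSupp G : Set (IntWreath G)) (· * ·) 1 (coneLE (lexPos r)) ↔
      ∀ a : G, 1 ≤ a ∨ a ≤ 1 :=
  ⟨one_le_or_le_one_of_rdp1 hr hnc, fun htot =>
    rdp1WithOn_coneLE (fun _ => lexPos_asymm) (fun _ => lexPos_trichotomy htot)⟩

end LexOrder

end IntWreath

theorem zwr_rdp1_iff_linearOrdered_general {G : Type*} [Group G] [PartialOrder G]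
    [CovariantClass G G (· * ·) (· ≤ ·)]
    (hdir : ∀ x y : G, ∃ z : G, x ≤ z ∧ y ≤ z)
    (hnc : ∃ x y : G, x * y ≠ y * x) :
    (RDP1WithOn (zwrS G) (fun p q : ℤ × (ℤ → G) => zwrMul p q) (zwrOne G) rLE ↔
      ∀ a b : G, a ≤ b ∨ b ≤ a) ∧
    (RDP1WithOn (zwrS G) (fun p q : ℤ × (ℤ → G) => zwrMul p q) (zwrOne G) lLE ↔
      ∀ a b : G, a ≤ b ∨ b ≤ a) ∧
    ((∀ a b : G, a ≤ b ∨ b ≤ a) →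
      (∀ p ∈ zwrS G, ∀ q ∈ zwrS G, rLE p q ∨ rLE q p) ∧
      (∀ p ∈ zwrS G, ∀ q ∈ zwrS G, lLE p q ∨ lLE q p)) := by
  have hnc_pos : ¬ ∀ a b : G, 1 < a → 1 < b → a * b = b * a := fun h =>
    let ⟨x, y, hxy⟩ := hnc
    hxy (mul_comm_of_one_lt_mul_comm hdir h x y)
  have hlt : ∀ i j : ℤ, ∃ k, k < i ∧ k < j := fun i j => ⟨min i j - 1, by omega, by omega⟩
  have hgt : ∀ i j : ℤ, ∃ k, k > i ∧ k > j := fun i j => ⟨max i j + 1, by omega, by omega⟩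
  rw [le_total_iff_one_le_or_le_one]
  exact ⟨IntWreath.rdp1WithOn_coneLE_lexPos_iff hlt hnc_pos,
    IntWreath.rdp1WithOn_coneLE_lexPos_iff hgt hnc_pos,
    fun htot => ⟨fun p hp q hq => coneLE_total (fun _ => IntWreath.lexPos_trichotomy htot) hp hq,
      fun p hp q hq => coneLE_total (fun _ => IntWreath.lexPos_trichotomy htot) hp hq⟩⟩

/-- For a non-commutative directed po-group `G`, the right
wreath product `ℤ →wr G` satisfies RDP₁ iff the left wreath product `ℤ ←wr G`
satisfies RDP₁ iff `G` is linearly ordered; and in any such case both wreath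
products are linearly ordered groups. -/
theorem zwr_rdp1_iff_linearOrdered {G : Type*} [Group G] [PartialOrder G]
    [CovariantClass G G (· * ·) (· ≤ ·)]
    [CovariantClass G G (Function.swap (· * ·)) (· ≤ ·)]
    (hdir : ∀ x y : G, ∃ z : G, x ≤ z ∧ y ≤ z)
    (hnc : ∃ x y : G, x * y ≠ y * x) :
    (RDP1WithOn (zwrS G) (fun p q : ℤ × (ℤ → G) => zwrMul p q) (zwrOne G) rLE ↔
      ∀ a b : G, a ≤ b ∨ b ≤ a) ∧
    (RDP1WithOn (zwrS G) (fun p q : ℤ × (ℤ → G) => zwrMul p q) (zwrOne G) lLE ↔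
      ∀ a b : G, a ≤ b ∨ b ≤ a) ∧
    ((∀ a b : G, a ≤ b ∨ b ≤ a) →
      (∀ p ∈ zwrS G, ∀ q ∈ zwrS G, rLE p q ∨ rLE q p) ∧
      (∀ p ∈ zwrS G, ∀ q ∈ zwrS G, lLE p q ∨ lLE q p)) :=
  zwr_rdp1_iff_linearOrdered_general hdir hnc
end

section
/- Let G be a directed non-atomistic Abelian po-group. The following are equivalent: (i) the right wreath product ℤ ⃗wr G satisfies RDP; (ii) the left wreath product ℤ ⃖wr G satisfies RDP; (iii) G satisfies RDP. -/
/-!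
The base group of `ℤ ≀ G` (the elements of shift `0`) consists of the finitely supported functions
`ℤ → G`. It is abelian, and in the right wreath product it is ordered by the value at the greatest
index where two functions differ. This order inherits Riesz interpolation from `G`: compare at
the greatest index where the two upper bounds differ and interpolate in `G` there; in an abelian
group interpolation gives decomposition. A decomposition problem with some nonzero shift is
solved by an explicit matrix, using that the base group is abelian and directed, and one with all
shifts zero lives in the base group. Conversely `G` embeds at the coordinate `0`, where every
decomposition has zero shifts and, by positivity, trivial coordinates above `0`. The reflection
`(n, ⟨g_i⟩) ↦ (n, ⟨g_{-i-n}⟩)` reverses products and exchanges the right and left orders, which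
reduces the left wreath product to the right one.
-/

open Function

section Riesz

variable {M : Type*}

def HasRieszDecompOn (S : Set M) (mul : M → M → M) (one : M) (le : M → M → Prop)
    (a₁ a₂ b₁ b₂ : M) : Prop :=
  ∃ c₁₁ c₁₂ c₂₁ c₂₂ : M, c₁₁ ∈ S ∧ c₁₂ ∈ S ∧ c₂₁ ∈ S ∧ c₂₂ ∈ S ∧
    le one c₁₁ ∧ le one c₁₂ ∧ le one c₂₁ ∧ le one c₂₂ ∧
    a₁ = mul c₁₁ c₁₂ ∧ a₂ = mul c₂₁ c₂₂ ∧ b₁ = mul c₁₁ c₂₁ ∧ b₂ = mul c₁₂ c₂₂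

lemma HasRieszDecompOn.transpose {S : Set M} {mul : M → M → M} {one : M} {le : M → M → Prop}
    {a₁ a₂ b₁ b₂ : M} (h : HasRieszDecompOn S mul one le b₁ b₂ a₁ a₂) :
    HasRieszDecompOn S mul one le a₁ a₂ b₁ b₂ :=
  let ⟨c₁₁, c₁₂, c₂₁, c₂₂, s₁₁, s₁₂, s₂₁, s₂₂, p₁₁, p₁₂, p₂₁, p₂₂, e₁, e₂, e₃, e₄⟩ := h
  ⟨c₁₁, c₂₁, c₁₂, c₂₂, s₁₁, s₂₁, s₁₂, s₂₂, p₁₁, p₂₁, p₁₂, p₂₂, e₃, e₄, e₁, e₂⟩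

lemma hasRieszDecompOn_of_commute [Group M] {S : Subgroup M} {le : M → M → Prop}
    {a₁ a₂ b₁ b₂ δ : M} (h : a₁ * a₂ = b₁ * b₂) (ha₁ : a₁ ∈ S) (ha₂ : a₂ ∈ S) (hb₁ : b₁ ∈ S)
    (hδ : δ ∈ S) (hcomm : Commute δ (a₁⁻¹ * b₁)) (h₁₁ : le 1 (a₁ * δ⁻¹)) (h₁₂ : le 1 δ)
    (h₂₁ : le 1 (δ * (a₁⁻¹ * b₁))) (h₂₂ : le 1 ((δ * (a₁⁻¹ * b₁))⁻¹ * a₂)) :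
    HasRieszDecompOn (S : Set M) (· * ·) 1 le a₁ a₂ b₁ b₂ := by
  have hδε : δ * (a₁⁻¹ * b₁) ∈ S := mul_mem hδ (mul_mem (inv_mem ha₁) hb₁)
  refine ⟨a₁ * δ⁻¹, δ, δ * (a₁⁻¹ * b₁), (δ * (a₁⁻¹ * b₁))⁻¹ * a₂, mul_mem ha₁ (inv_mem hδ), hδ,
    hδε, mul_mem (inv_mem hδε) ha₂, h₁₁, h₁₂, h₂₁, h₂₂, (inv_mul_cancel_right a₁ δ).symm,
    (mul_inv_cancel_left _ a₂).symm, by group, ?_⟩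
  -- with `ε = a₁⁻¹ * b₁`: `δ (δ ε)⁻¹ a₂ = ε⁻¹ a₂ = b₂` since `δ` and `ε` commute
  beta_reduce
  rw [hcomm.eq, mul_inv_rev, mul_assoc, mul_inv_cancel_left, mul_inv_rev, inv_inv, mul_assoc, h,
    inv_mul_cancel_left]

lemma rdpWithOn_of_exists_between [CommGroup M] {S : Subgroup M} {le : M → M → Prop}
    (hle : ∀ a b c, le a b → le (c * a) (c * b))
    (h : ∀ x ∈ S, ∀ y₁ ∈ S, ∀ y₂ ∈ S, le 1 y₁ → le 1 y₂ → le x y₁ → le x y₂ →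
      ∃ z ∈ S, le 1 z ∧ le x z ∧ le z y₁ ∧ le z y₂) :
    RDPWithOn (S : Set M) (· * ·) 1 le := by
  have hle' : ∀ a b, le a b → le 1 (b / a) := fun a b hab => by
    simpa [inv_mul_eq_div] using hle a b a⁻¹ hab
  intro a₁ a₂ b₁ b₂ ha₁ ha₂ hb₁ hb₂ h₁ h₂ h₃ h₄ heq
  dsimp only at heq ⊢
  -- `x = b₁ / a₂ = a₁ / b₂` is a common lower bound of `a₁` and `b₁`
  set x := b₁ / a₂
  have hx₁ : le x a₁ := by
    simpa [x, ← heq, div_mul_eq_mul_div] using hle 1 b₂ x h₄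
  have hx₂ : le x b₁ := by simpa [x] using hle 1 a₂ x h₂
  obtain ⟨z, hz, h1z, hxz, hz₁, hz₂⟩ := h x (div_mem hb₁ ha₂) a₁ ha₁ b₁ hb₁ h₁ h₃ hx₁ hx₂
  refine ⟨z, a₁ / z, b₁ / z, z / x, hz, div_mem ha₁ hz, div_mem hb₁ hz,
    div_mem hz (div_mem hb₁ ha₂), h1z, hle' _ _ hz₁, hle' _ _ hz₂, hle' _ _ hxz,
    (mul_div_cancel z a₁).symm, by rw [div_mul_div_cancel, div_div_cancel],
    (mul_div_cancel z b₁).symm, ?_⟩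
  rw [div_mul_div_cancel, div_div_eq_mul_div, heq, mul_div_cancel_left]

lemma RDPWithOn.of_antihom {N : Type*} {S : Set M} {T : Set N} {mulM : M → M → M} {oneM : M}
    {leM : M → M → Prop} {mulN : N → N → N} {oneN : N} {leN : N → N → Prop} (f : M → N)
    (g : N → M) (hgf : ∀ x, g (f x) = x) (hf : ∀ x ∈ S, f x ∈ T) (hg : ∀ y ∈ T, g y ∈ S)
    (hf_mul : ∀ x y, f (mulM x y) = mulN (f y) (f x))
    (hg_mul : ∀ x y, g (mulN x y) = mulM (g y) (g x))
    (hf_le : ∀ x, leM oneM x → leN oneN (f x)) (hg_le : ∀ y, leN oneN y → leM oneM (g y))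
    (h : RDPWithOn T mulN oneN leN) : RDPWithOn S mulM oneM leM := by
  intro a₁ a₂ b₁ b₂ ha₁ ha₂ hb₁ hb₂ h₁ h₂ h₃ h₄ heq
  obtain ⟨d₁₁, d₁₂, d₂₁, d₂₂, s₁₁, s₁₂, s₂₁, s₂₂, p₁₁, p₁₂, p₂₁, p₂₂, e₁, e₂, e₃, e₄⟩ :=
    h (f a₂) (f a₁) (f b₂) (f b₁) (hf _ ha₂) (hf _ ha₁) (hf _ hb₂) (hf _ hb₁) (hf_le _ h₂)
      (hf_le _ h₁) (hf_le _ h₄) (hf_le _ h₃) (by rw [← hf_mul, ← hf_mul, heq])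
  refine ⟨g d₂₂, g d₂₁, g d₁₂, g d₁₁, hg _ s₂₂, hg _ s₂₁, hg _ s₁₂, hg _ s₁₁, hg_le _ p₂₂,
    hg_le _ p₂₁, hg_le _ p₁₂, hg_le _ p₁₁, ?_, ?_, ?_, ?_⟩ <;> rw [← hg_mul]
  · rw [← e₂, hgf]
  · rw [← e₁, hgf]
  · rw [← e₄, hgf]
  · rw [← e₃, hgf]

end Riesz

section Directed

variable {G : Type*} [CommGroup G] [PartialOrder G] [MulLeftMono G]

instance [IsDirectedOrder G] : IsCodirectedOrder G where
  directed x y := by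
    obtain ⟨z, hxz, hyz⟩ := exists_ge_ge x⁻¹ y⁻¹
    exact ⟨z⁻¹, inv_le'.mp hxz, inv_le'.mp hyz⟩

lemma exists_one_lt_of_ne_one [IsDirectedOrder G] {g : G} (hg : g ≠ 1) : ∃ p : G, 1 < p := by
  obtain ⟨z, hgz, h1z⟩ := exists_ge_ge g 1
  rcases h1z.lt_or_eq with h | rfl
  · exact ⟨z, h⟩
  · exact ⟨g⁻¹, one_lt_inv'.mpr (hgz.lt_of_ne hg)⟩

lemma RDPWith.exists_between (hG : RDPWith (fun a b : G => a * b) 1 (· ≤ ·))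
    {x₁ x₂ y₁ y₂ : G} (h₁₁ : x₁ ≤ y₁) (h₁₂ : x₁ ≤ y₂) (h₂₁ : x₂ ≤ y₁) (h₂₂ : x₂ ≤ y₂) :
    ∃ z, x₁ ≤ z ∧ x₂ ≤ z ∧ z ≤ y₁ ∧ z ≤ y₂ := by
  obtain ⟨c₁₁, c₁₂, c₂₁, c₂₂, hc₁₁, hc₁₂, hc₂₁, hc₂₂, e₁, e₂, -, e₄⟩ :=
    hG (y₁ / x₁) (y₂ / x₂) (y₁ / x₂) (y₂ / x₁) (one_le_div'.mpr h₁₁) (one_le_div'.mpr h₂₂)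
      (one_le_div'.mpr h₂₁) (one_le_div'.mpr h₁₂)
      (by simp only [div_mul_div_comm, mul_comm x₁ x₂])
  rw [div_eq_iff_eq_mul'] at e₁ e₂ e₄
  have hz : x₁ * c₁₂ = x₂ * c₂₁ :=
    mul_right_cancel (b := c₂₂) (by rw [mul_assoc, mul_assoc, ← e₂, ← e₄])
  refine ⟨x₁ * c₁₂, le_mul_of_one_le_right' hc₁₂, hz ▸ le_mul_of_one_le_right' hc₂₁, ?_, ?_⟩
  · rw [e₁, mul_left_comm]
    exact le_mul_of_one_le_left' hc₁₁
  · rw [hz, e₂, ← mul_assoc]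
    exact le_mul_of_one_le_right' hc₂₂

end Directed

section TopOrder

variable {G : Type*}

def TopLTAt [LT G] (j : ℤ) (φ ψ : ℤ → G) : Prop :=
  φ j < ψ j ∧ ∀ i, j < i → φ i = ψ i

def TopLE [LT G] (φ ψ : ℤ → G) : Prop :=
  φ = ψ ∨ ∃ j, TopLTAt j φ ψ

lemma TopLE.refl [LT G] (φ : ℤ → G) : TopLE φ φ := Or.inl rfl

lemma TopLTAt.topLE [LT G] {j : ℤ} {φ ψ : ℤ → G} (h : TopLTAt j φ ψ) : TopLE φ ψ :=
  Or.inr ⟨j, h⟩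

lemma TopLTAt.congr_right [LT G] {j : ℤ} {φ ψ ψ' : ℤ → G} (h : TopLTAt j φ ψ)
    (hψ : ∀ i, j ≤ i → ψ i = ψ' i) : TopLTAt j φ ψ' :=
  ⟨hψ j le_rfl ▸ h.1, fun i hi => (h.2 i hi).trans (hψ i hi.le)⟩

lemma topLTAt_of_eqOn_Ioi_one [LT G] [One G] {φ ψ : ℤ → G} {j : ℤ} (h : φ j < ψ j)
    (hφ : ∀ i, j < i → φ i = 1) (hψ : ∀ i, j < i → ψ i = 1) : TopLTAt j φ ψ :=
  ⟨h, fun i hi => (hφ i hi).trans (hψ i hi).symm⟩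

lemma mulSingle_eqOn_Ioi [One G] (j : ℤ) (g : G) :
    ∀ i, j < i → (Pi.mulSingle j g : ℤ → G) i = 1 :=
  fun _ hi => Pi.mulSingle_eq_of_ne (M := fun _ => G) hi.ne' g

lemma TopLE.le_of_eqOn_Ioi [Preorder G] {φ ψ : ℤ → G} (h : TopLE φ ψ) {j : ℤ}
    (hj : ∀ i, j < i → φ i = ψ i) : φ j ≤ ψ j := by
  rcases h with rfl | ⟨k, hlt, heq⟩
  · exact le_rfl
  · rcases lt_trichotomy k j with hkj | rfl | hjk
    · exact (heq j hkj).le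
    · exact hlt.le
    · exact absurd (hj k hjk) hlt.ne

lemma topLE_one_mulSingle [One G] [PartialOrder G] {g : G} (hg : 1 ≤ g) (j : ℤ) :
    TopLE 1 (Pi.mulSingle j g) := by
  rcases hg.lt_or_eq with hg | rfl
  · exact (topLTAt_of_eqOn_Ioi_one (by simpa using hg) (fun _ _ => rfl)
      (mulSingle_eqOn_Ioi j g)).topLE
  · simpa using TopLE.refl (1 : ℤ → G)

variable [CommGroup G] [PartialOrder G] [MulLeftMono G]

lemma TopLE.mul_left {φ ψ : ℤ → G} (h : TopLE φ ψ) (χ : ℤ → G) : TopLE (χ * φ) (χ * ψ) := by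
  rcases h with rfl | ⟨j, hlt, heq⟩
  · exact .refl _
  · exact Or.inr ⟨j, mul_lt_mul_right hlt (χ j), fun i hi => by simp [heq i hi]⟩

lemma one_le_of_topLE_of_mul_eqOn_Ioi {φ ψ : ℤ → G} (hφ : TopLE 1 φ) (hψ : TopLE 1 ψ) {k : ℤ}
    (h : ∀ i, k < i → φ i * ψ i = 1) : 1 ≤ φ k := by
  refine hφ.le_of_eqOn_Ioi fun i hki => ?_
  rcases hφ with rfl | ⟨j, hj, hφj⟩
  · rfl
  rcases le_or_gt j k with hjk | hkj
  · exact hφj i (hjk.trans_lt hki)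
  -- otherwise `ψ` is trivial above the top index `j > k` of `φ`, so `1 < φ j * ψ j`
  have hψj : 1 ≤ ψ j := hψ.le_of_eqOn_Ioi fun l hjl => by
    simpa [← hφj l hjl] using (h l (hkj.trans hjl)).symm
  exact absurd (h j hkj) (one_lt_mul_of_lt_of_le' hj hψj).ne'

end TopOrder

section FiniteSupport

variable {G : Type*} [Group G]

variable (G) in
def finiteMulSupport : Subgroup (ℤ → G) where
  carrier := {φ | (mulSupport φ).Finite}
  mul_mem' hφ hψ := (hφ.union hψ).subset (mulSupport_mul _ _)
  one_mem' := by simp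
  inv_mem' hφ := by simpa [mulSupport_inv] using hφ

lemma mulSingle_mem_finiteMulSupport (j : ℤ) (g : G) : Pi.mulSingle j g ∈ finiteMulSupport G :=
  (Set.finite_singleton j).subset Pi.mulSupport_mulSingle_subset

lemma update_mem_finiteMulSupport {φ : ℤ → G} (hφ : φ ∈ finiteMulSupport G) (j : ℤ) (g : G) :
    update φ j g ∈ finiteMulSupport G := by
  refine (hφ.insert j).subset fun i hi => ?_
  by_cases hij : i = j
  · exact Or.inl hij
  · exact Or.inr (by simpa [update_of_ne hij] using hi)

lemma comp_mem_finiteMulSupport {φ : ℤ → G} (hφ : φ ∈ finiteMulSupport G) {f : ℤ → ℤ}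
    (hf : Injective f) : φ ∘ f ∈ finiteMulSupport G := by
  change (mulSupport (φ ∘ f)).Finite
  rw [mulSupport_comp_eq_preimage]
  exact hφ.preimage hf.injOn

lemma exists_greatest_ne {φ ψ : ℤ → G} (hφ : φ ∈ finiteMulSupport G)
    (hψ : ψ ∈ finiteMulSupport G) (hne : φ ≠ ψ) :
    ∃ J, φ J ≠ ψ J ∧ ∀ i, J < i → φ i = ψ i := by
  have hfin : {i | φ i ≠ ψ i}.Finite := (hφ.union hψ).subset fun i hi => by
    by_contra h
    simp only [Set.mem_union, mem_mulSupport, not_or, not_not] at h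
    exact hi (h.1.trans h.2.symm)
  obtain ⟨b, hb⟩ := hfin.bddAbove
  obtain ⟨J, hJ, hmax⟩ := Int.exists_greatest_of_bdd ⟨b, fun i hi => hb hi⟩ (ne_iff.mp hne)
  exact ⟨J, hJ, fun i hJi => not_not.mp fun h => (hmax i h).not_gt hJi⟩

end FiniteSupport

section Interpolation

variable {G : Type*} [CommGroup G] [PartialOrder G] [MulLeftMono G] [IsDirectedOrder G]

lemma exists_topLTAt_mulSingle {x : ℤ → G} (hx : x ∈ finiteMulSupport G) (hx1 : x ≠ 1) :
    ∃ m g, x m ≠ 1 ∧ TopLTAt m 1 (Pi.mulSingle m g) ∧ TopLTAt m x (Pi.mulSingle m g) := by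
  obtain ⟨m, hm, hxm⟩ := exists_greatest_ne hx (one_mem _) hx1
  obtain ⟨p, hp⟩ := exists_one_lt_of_ne_one hm
  obtain ⟨u, hxu, h1u⟩ := exists_ge_ge (x m) 1
  refine ⟨m, u * p, hm, topLTAt_of_eqOn_Ioi_one ?_ (fun _ _ => rfl) (mulSingle_eqOn_Ioi m _),
    topLTAt_of_eqOn_Ioi_one ?_ hxm (mulSingle_eqOn_Ioi m _)⟩
  · simpa using one_lt_mul_of_le_of_lt' h1u hp
  · simpa using hxu.trans_lt (lt_mul_of_one_lt_right' u hp)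

lemma exists_topLE_one_mul {ε : ℤ → G} (hε : ε ∈ finiteMulSupport G) :
    ∃ δ ∈ finiteMulSupport G, TopLE 1 δ ∧ TopLE 1 (δ * ε) := by
  by_cases h : ε = 1
  · exact ⟨1, one_mem _, .refl _, by simpa [h] using .refl _⟩
  obtain ⟨m, g, -, h1δ, hεδ⟩ := exists_topLTAt_mulSingle (inv_mem hε) (inv_ne_one.mpr h)
  exact ⟨Pi.mulSingle m g, mulSingle_mem_finiteMulSupport m g, h1δ.topLE,
    by simpa [mul_comm] using hεδ.topLE.mul_left ε⟩

/-- The interpolant agrees with `y₁` above `J` and is a strict lower bound of `y₁ J` and `y₂ J` at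
`J`; it stays above `1` and `x`, which are separated from `y₁` above `J`. -/
lemma exists_topLE_between_of_lt_of_lt {x y₁ y₂ : ℤ → G} {J q r : ℤ}
    (hy₁ : y₁ ∈ finiteMulSupport G) (hJ : y₁ J ≠ y₂ J) (hy : ∀ i, J < i → y₁ i = y₂ i)
    (hq : TopLTAt q 1 y₁) (hr : TopLTAt r x y₁) (hJq : J < q) (hJr : J < r) :
    ∃ z ∈ finiteMulSupport G, TopLE 1 z ∧ TopLE x z ∧ TopLE z y₁ ∧ TopLE z y₂ := by
  obtain ⟨p, hp⟩ := exists_one_lt_of_ne_one (div_ne_one.mpr hJ)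
  obtain ⟨w, hw₁, hw₂⟩ := exists_le_le (y₁ J) (y₂ J)
  have hwp : w / p < w := (div_lt_self_iff w).mpr hp
  have hz : ∀ i, J < i → update y₁ J (w / p) i = y₁ i := fun i hi => update_of_ne hi.ne' _ _
  refine ⟨update y₁ J (w / p), update_mem_finiteMulSupport hy₁ J _,
    (hq.congr_right fun i hi => (hz i (hJq.trans_le hi)).symm).topLE,
    (hr.congr_right fun i hi => (hz i (hJr.trans_le hi)).symm).topLE,
    Or.inr ⟨J, ?_, hz⟩, Or.inr ⟨J, ?_, fun i hi => (hz i hi).trans (hy i hi)⟩⟩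
  · simpa using hwp.trans_le hw₁
  · simpa using hwp.trans_le hw₂

lemma exists_topLE_between_of_eqOn_Ioi_one (hG : RDPWith (fun a b : G => a * b) 1 (· ≤ ·))
    {x y₁ y₂ : ℤ → G} {J : ℤ} (hx : x ∈ finiteMulSupport G)
    (hx1 : ¬ TopLE x 1) (h1x : ¬ TopLE 1 x) (h₁ : TopLE 1 y₁) (h₂ : TopLE 1 y₂)
    (hx₁ : TopLE x y₁) (hx₂ : TopLE x y₂) (hJ₁₂ : ¬ y₁ J ≤ y₂ J) (hJ₂₁ : ¬ y₂ J ≤ y₁ J)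
    (hx0 : ∀ i, J < i → x i = 1) (hy₁0 : ∀ i, J < i → y₁ i = 1) (hy₂0 : ∀ i, J < i → y₂ i = 1) :
    ∃ z ∈ finiteMulSupport G, TopLE 1 z ∧ TopLE x z ∧ TopLE z y₁ ∧ TopLE z y₂ := by
  have h₁J : 1 ≤ y₁ J := h₁.le_of_eqOn_Ioi fun i hi => (hy₁0 i hi).symm
  have h₂J : 1 ≤ y₂ J := h₂.le_of_eqOn_Ioi fun i hi => (hy₂0 i hi).symm
  have hx₁J : x J ≤ y₁ J := hx₁.le_of_eqOn_Ioi fun i hi => (hx0 i hi).trans (hy₁0 i hi).symm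
  have hx₂J : x J ≤ y₂ J := hx₂.le_of_eqOn_Ioi fun i hi => (hx0 i hi).trans (hy₂0 i hi).symm
  by_cases hxJ : x J = 1
  · -- `x` and `1` are separated below `J`; raise the top coordinate of `x`
    obtain ⟨m, g, hm, h1z, hxz⟩ := exists_topLTAt_mulSingle hx fun h => hx1 (h ▸ .refl _)
    have hmJ : m < J := lt_of_not_ge fun h => hm <| h.eq_or_lt.elim (· ▸ hxJ) (hx0 m)
    have hz : ∀ i, J < i → (Pi.mulSingle m g : ℤ → G) i = 1 := fun i hi =>
      mulSingle_eqOn_Ioi m g i (hmJ.trans hi)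
    refine ⟨Pi.mulSingle m g, mulSingle_mem_finiteMulSupport m g, h1z.topLE, hxz.topLE,
      (topLTAt_of_eqOn_Ioi_one ?_ hz hy₁0).topLE, (topLTAt_of_eqOn_Ioi_one ?_ hz hy₂0).topLE⟩
      <;> rw [mulSingle_eqOn_Ioi m g J hmJ]
    · exact h₁J.lt_of_ne fun h => hJ₁₂ (h ▸ h₂J)
    · exact h₂J.lt_of_ne fun h => hJ₂₁ (h ▸ h₁J)
  · -- interpolate in `G` at `J`; the excluded comparabilities make all inequalities strict
    obtain ⟨Z, hxZ, h1Z, hZ₁, hZ₂⟩ := hG.exists_between hx₁J hx₂J h₁J h₂J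
    have hZ : ∀ i, J < i → (Pi.mulSingle J Z : ℤ → G) i = 1 := mulSingle_eqOn_Ioi J Z
    refine ⟨Pi.mulSingle J Z, mulSingle_mem_finiteMulSupport J Z,
      (topLTAt_of_eqOn_Ioi_one ?_ (fun _ _ => rfl) hZ).topLE,
      (topLTAt_of_eqOn_Ioi_one ?_ hx0 hZ).topLE,
      (topLTAt_of_eqOn_Ioi_one ?_ hZ hy₁0).topLE,
      (topLTAt_of_eqOn_Ioi_one ?_ hZ hy₂0).topLE⟩ <;> rw [Pi.mulSingle_eq_same]
    · exact h1Z.lt_of_ne fun h => hx1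
        (topLTAt_of_eqOn_Ioi_one ((h ▸ hxZ).lt_of_ne hxJ) hx0 fun _ _ => rfl).topLE
    · exact hxZ.lt_of_ne fun h => h1x
        (topLTAt_of_eqOn_Ioi_one ((h ▸ h1Z).lt_of_ne (Ne.symm hxJ)) (fun _ _ => rfl) hx0).topLE
    · exact hZ₁.lt_of_ne fun h => hJ₁₂ (h ▸ hZ₂)
    · exact hZ₂.lt_of_ne fun h => hJ₂₁ (h ▸ hZ₁)

lemma exists_topLE_between (hG : RDPWith (fun a b : G => a * b) 1 (· ≤ ·)) {x y₁ y₂ : ℤ → G}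
    (hx : x ∈ finiteMulSupport G) (hy₁ : y₁ ∈ finiteMulSupport G)
    (hy₂ : y₂ ∈ finiteMulSupport G) (h₁ : TopLE 1 y₁) (h₂ : TopLE 1 y₂) (hx₁ : TopLE x y₁)
    (hx₂ : TopLE x y₂) :
    ∃ z ∈ finiteMulSupport G, TopLE 1 z ∧ TopLE x z ∧ TopLE z y₁ ∧ TopLE z y₂ := by
  by_cases hx1 : TopLE x 1
  · exact ⟨1, one_mem _, .refl _, hx1, h₁, h₂⟩
  by_cases h1x : TopLE 1 x
  · exact ⟨x, hx, h1x, .refl _, hx₁, hx₂⟩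
  by_cases h₁₂ : TopLE y₁ y₂
  · exact ⟨y₁, hy₁, h₁, hx₁, .refl _, h₁₂⟩
  by_cases h₂₁ : TopLE y₂ y₁
  · exact ⟨y₂, hy₂, h₂, hx₂, h₂₁, .refl _⟩
  obtain ⟨J, hJ, hy⟩ := exists_greatest_ne hy₁ hy₂ fun h => h₁₂ (h ▸ .refl _)
  have hJ₁₂ : ¬ y₁ J ≤ y₂ J := fun h => h₁₂ (Or.inr ⟨J, h.lt_of_ne hJ, hy⟩)
  have hJ₂₁ : ¬ y₂ J ≤ y₁ J := fun h =>
    h₂₁ (Or.inr ⟨J, h.lt_of_ne (Ne.symm hJ), fun i hi => (hy i hi).symm⟩)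
  obtain ⟨q, hq⟩ := h₁.resolve_left fun h => h₁₂ (h ▸ h₂)
  obtain ⟨r, hr⟩ := hx₁.resolve_left fun h => h₁₂ (h ▸ hx₂)
  -- if exactly one of `1 < y₁` and `x < y₁` is decided above `J`, then `1` and `x` are comparable
  rcases lt_or_ge J q with hJq | hqJ <;> rcases lt_or_ge J r with hJr | hrJ
  · exact exists_topLE_between_of_lt_of_lt hy₁ hJ hy hq hr hJq hJr
  · exact absurd (hq.congr_right fun i hi =>
      (hr.2 i (hrJ.trans_lt (hJq.trans_le hi))).symm).topLE h1x
  · exact absurd (hr.congr_right fun i hi =>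
      (hq.2 i (hqJ.trans_lt (hJr.trans_le hi))).symm).topLE hx1
  · have hy₁0 : ∀ i, J < i → y₁ i = 1 := fun i hi => (hq.2 i (hqJ.trans_lt hi)).symm
    exact exists_topLE_between_of_eqOn_Ioi_one hG hx hx1 h1x h₁ h₂ hx₁ hx₂ hJ₁₂ hJ₂₁
      (fun i hi => (hr.2 i (hrJ.trans_lt hi)).trans (hy₁0 i hi)) hy₁0
      (fun i hi => (hy i hi).symm.trans (hy₁0 i hi))

lemma rdpWithOn_topLE (hG : RDPWith (fun a b : G => a * b) 1 (· ≤ ·)) :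
    RDPWithOn (finiteMulSupport G : Set (ℤ → G)) (· * ·) 1 TopLE :=
  rdpWithOn_of_exists_between (fun _ _ χ h => h.mul_left χ)
    fun _ hx _ hy₁ _ hy₂ => exists_topLE_between hG hx hy₁ hy₂

end Interpolation

/-- A type synonym, so that `*` is `zwrMul` and not the componentwise product of `ℤ × (ℤ → G)`. -/
def ZWr (G : Type*) := ℤ × (ℤ → G)

namespace ZWr

section Group

variable {G : Type*} [Group G]

instance : Mul (ZWr G) := ⟨zwrMul⟩
instance : One (ZWr G) := ⟨zwrOne G⟩
instance : Inv (ZWr G) := ⟨zwrInv⟩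

instance : Group (ZWr G) :=
  Group.ofLeftAxioms
    (fun p q r => Prod.ext (add_assoc _ _ _) (funext fun i => by
      change p.2 i * q.2 (i + p.1) * r.2 (i + (p.1 + q.1)) =
        p.2 i * (q.2 (i + p.1) * r.2 (i + p.1 + q.1))
      rw [mul_assoc, add_assoc]))
    (fun p => Prod.ext (zero_add _) (funext fun i => by
      change 1 * p.2 (i + 0) = p.2 i
      rw [one_mul, add_zero]))
    (fun p => Prod.ext (neg_add_cancel _) (funext fun i => by
      change (p.2 (i - p.1))⁻¹ * p.2 (i + -p.1) = 1
      rw [← sub_eq_add_neg, inv_mul_cancel]))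

@[simp] lemma fst_mul (p q : ZWr G) : (p * q).1 = p.1 + q.1 := rfl
@[simp] lemma fst_inv (p : ZWr G) : p⁻¹.1 = -p.1 := rfl

variable (G) in
def restricted : Subgroup (ZWr G) where
  carrier := zwrS G
  mul_mem' {p q} hp hq := by
    change p.2 * (q.2 ∘ (· + p.1)) ∈ finiteMulSupport G
    exact mul_mem hp (comp_mem_finiteMulSupport hq (add_left_injective p.1))
  one_mem' := one_mem (finiteMulSupport G)
  inv_mem' {p} hp := by
    change (p.2 ∘ (· - p.1))⁻¹ ∈ finiteMulSupport G
    exact inv_mem (comp_mem_finiteMulSupport hp (sub_left_injective (b := p.1)))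

lemma mem_restricted {p : ZWr G} : p ∈ restricted G ↔ p.2 ∈ finiteMulSupport G := Iff.rfl

variable (G) in
def base : (ℤ → G) →* ZWr G where
  toFun φ := (0, φ)
  map_one' := rfl
  map_mul' φ ψ := Prod.ext (add_zero 0).symm (funext fun i => by
    change φ i * ψ i = φ i * ψ (i + 0)
    rw [add_zero])

@[simp] lemma fst_base (φ : ℤ → G) : (base G φ).1 = 0 := rfl

lemma base_injective : Injective (base G) := fun _ _ h => congrArg Prod.snd h

lemma base_snd {p : ZWr G} (hp : p.1 = 0) : base G p.2 = p := Prod.ext hp.symm rfl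

variable [PartialOrder G]

lemma rLE_one_iff (p : ZWr G) : rLE (1 : ZWr G) p ↔ p = 1 ∨ rPos p := by
  change 1 = p ∨ rPos ((1 : ZWr G)⁻¹ * p) ↔ _
  rw [inv_one, one_mul, eq_comm]

lemma lLE_one_iff (p : ZWr G) : lLE (1 : ZWr G) p ↔ p = 1 ∨ lPos p := by
  change 1 = p ∨ lPos ((1 : ZWr G)⁻¹ * p) ↔ _
  rw [inv_one, one_mul, eq_comm]

lemma rLE_one_one : rLE (1 : ZWr G) (1 : ZWr G) := Or.inl rfl

lemma rLE_one_of_fst_pos {p : ZWr G} (hp : 0 < p.1) : rLE (1 : ZWr G) p :=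
  (rLE_one_iff p).mpr (Or.inr (Or.inl hp))

lemma fst_nonneg_of_rLE_one {p : ZWr G} (hp : rLE (1 : ZWr G) p) : 0 ≤ p.1 := by
  rcases (rLE_one_iff p).mp hp with rfl | hp | ⟨hp, -⟩
  · exact le_rfl
  · exact hp.le
  · exact hp.ge

lemma fst_eq_zero_of_mul_fst_eq_zero {p q : ZWr G} (hp : rLE (1 : ZWr G) p)
    (hq : rLE (1 : ZWr G) q) (h : (p * q).1 = 0) : p.1 = 0 ∧ q.1 = 0 := by
  have := fst_nonneg_of_rLE_one hp
  have := fst_nonneg_of_rLE_one hq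
  simp only [fst_mul] at h
  omega

lemma rLE_one_base_iff (φ : ℤ → G) : rLE (1 : ZWr G) (base G φ) ↔ TopLE 1 φ := by
  rw [rLE_one_iff, ← map_one (base G), base_injective.eq_iff, eq_comm]
  refine or_congr Iff.rfl ⟨?_, ?_⟩
  · rintro (h | ⟨-, j, hj, h⟩)
    · exact absurd h (lt_irrefl 0)
    · exact ⟨j, hj, fun i hi => (h i hi).symm⟩
  · rintro ⟨j, hj, h⟩
    exact Or.inr ⟨rfl, j, hj, fun i hi => (h i hi).symm⟩

lemma hasRieszDecompOn_of_fst_lt {a₁ a₂ b₁ b₂ : ZWr G} (h : a₁ * a₂ = b₁ * b₂)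
    (ha₁ : a₁ ∈ restricted G) (ha₂ : a₂ ∈ restricted G) (hb₁ : b₁ ∈ restricted G)
    (h₁ : rLE (1 : ZWr G) a₁) (h₄ : rLE (1 : ZWr G) b₂) (hlt : a₁.1 < b₁.1) :
    HasRieszDecompOn (restricted G : Set (ZWr G)) (· * ·) 1 rLE a₁ a₂ b₁ b₂ := by
  have hb₂ : (a₁⁻¹ * b₁)⁻¹ * a₂ = b₂ := by
    rw [mul_inv_rev, inv_inv, mul_assoc, h, inv_mul_cancel_left]
  refine hasRieszDecompOn_of_commute (δ := 1) h ha₁ ha₂ hb₁ (one_mem _) (Commute.one_left _)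
    ?_ rLE_one_one ?_ ?_
  · simpa using h₁
  · exact rLE_one_of_fst_pos (by simp; omega)
  · rwa [one_mul, hb₂]

end Group

lemma commute_of_fst_eq_zero {G : Type*} [CommGroup G] {p q : ZWr G} (hp : p.1 = 0)
    (hq : q.1 = 0) : Commute p q := by
  rw [← base_snd hp, ← base_snd hq]
  exact (Commute.all p.2 q.2).map (base G)

section Forward

variable {G : Type*} [CommGroup G] [PartialOrder G] [MulLeftMono G] [IsDirectedOrder G]

lemma hasRieszDecompOn_of_fst_eq_zero (hG : RDPWith (fun a b : G => a * b) 1 (· ≤ ·))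
    {a₁ a₂ b₁ b₂ : ZWr G} (h : a₁ * a₂ = b₁ * b₂)
    (ha₁ : a₁ ∈ restricted G) (ha₂ : a₂ ∈ restricted G) (hb₁ : b₁ ∈ restricted G)
    (hb₂ : b₂ ∈ restricted G) (h₁ : rLE (1 : ZWr G) a₁) (h₂ : rLE (1 : ZWr G) a₂)
    (h₃ : rLE (1 : ZWr G) b₁) (h₄ : rLE (1 : ZWr G) b₂)
    (ha₁0 : a₁.1 = 0) (ha₂0 : a₂.1 = 0) (hb₁0 : b₁.1 = 0) (hb₂0 : b₂.1 = 0) :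
    HasRieszDecompOn (restricted G : Set (ZWr G)) (· * ·) 1 rLE a₁ a₂ b₁ b₂ := by
  obtain ⟨φ₁, rfl⟩ : ∃ φ, base G φ = a₁ := ⟨_, base_snd ha₁0⟩
  obtain ⟨φ₂, rfl⟩ : ∃ φ, base G φ = a₂ := ⟨_, base_snd ha₂0⟩
  obtain ⟨ψ₁, rfl⟩ : ∃ ψ, base G ψ = b₁ := ⟨_, base_snd hb₁0⟩
  obtain ⟨ψ₂, rfl⟩ : ∃ ψ, base G ψ = b₂ := ⟨_, base_snd hb₂0⟩
  rw [← map_mul, ← map_mul] at h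
  simp only [rLE_one_base_iff] at h₁ h₂ h₃ h₄
  obtain ⟨c₁₁, c₁₂, c₂₁, c₂₂, s₁₁, s₁₂, s₂₁, s₂₂, p₁₁, p₁₂, p₂₁, p₂₂, e₁, e₂, e₃, e₄⟩ :=
    rdpWithOn_topLE hG _ _ _ _ ha₁ ha₂ hb₁ hb₂ h₁ h₂ h₃ h₄ (base_injective h)
  refine ⟨base G c₁₁, base G c₁₂, base G c₂₁, base G c₂₂, s₁₁, s₁₂, s₂₁, s₂₂,
    (rLE_one_base_iff _).mpr p₁₁, (rLE_one_base_iff _).mpr p₁₂, (rLE_one_base_iff _).mpr p₂₁,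
    (rLE_one_base_iff _).mpr p₂₂, ?_, ?_, ?_, ?_⟩ <;> simp only [← map_mul] <;> congr

lemma hasRieszDecompOn_of_fst_eq (hG : RDPWith (fun a b : G => a * b) 1 (· ≤ ·))
    {a₁ a₂ b₁ b₂ : ZWr G} (h : a₁ * a₂ = b₁ * b₂)
    (ha₁ : a₁ ∈ restricted G) (ha₂ : a₂ ∈ restricted G) (hb₁ : b₁ ∈ restricted G)
    (hb₂ : b₂ ∈ restricted G) (h₁ : rLE (1 : ZWr G) a₁) (h₂ : rLE (1 : ZWr G) a₂)
    (h₃ : rLE (1 : ZWr G) b₁) (h₄ : rLE (1 : ZWr G) b₂) (hab : a₁.1 = b₁.1) :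
    HasRieszDecompOn (restricted G : Set (ZWr G)) (· * ·) 1 rLE a₁ a₂ b₁ b₂ := by
  have hab₂ : a₂.1 = b₂.1 := by simpa [hab] using congrArg Prod.fst h
  have hε : (a₁⁻¹ * b₁).1 = 0 := by simp [hab]
  have hεS : a₁⁻¹ * b₁ ∈ restricted G := mul_mem (inv_mem ha₁) hb₁
  rcases (fst_nonneg_of_rLE_one h₁).eq_or_lt with hn | hn <;>
    rcases (fst_nonneg_of_rLE_one h₂).eq_or_lt with hm | hm
  · exact hasRieszDecompOn_of_fst_eq_zero hG h ha₁ ha₂ hb₁ hb₂ h₁ h₂ h₃ h₄ hn.symm hm.symm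
      (hab ▸ hn.symm) (hab₂ ▸ hm.symm)
  · refine hasRieszDecompOn_of_commute (δ := a₁) h ha₁ ha₂ hb₁ ha₁
      (commute_of_fst_eq_zero hn.symm hε) ?_ h₁ ?_ (rLE_one_of_fst_pos (by simp; omega))
    · simpa using rLE_one_one
    · simpa using h₃
  · have hcomm := commute_of_fst_eq_zero (hab₂ ▸ hm.symm) hε
    have hb₂ε : b₂ * (a₁⁻¹ * b₁) = a₂ := by
      rw [hcomm.eq, mul_assoc, ← h, inv_mul_cancel_left]
    refine hasRieszDecompOn_of_commute (δ := b₂) h ha₁ ha₂ hb₁ hb₂ hcomm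
      (rLE_one_of_fst_pos (by simp; omega)) h₄ (hb₂ε ▸ h₂) ?_
    rw [hb₂ε, inv_mul_cancel]
    exact rLE_one_one
  · obtain ⟨δ, hδ, h1δ, h1δε⟩ := exists_topLE_one_mul (mem_restricted.mp hεS)
    refine hasRieszDecompOn_of_commute (δ := base G δ) h ha₁ ha₂ hb₁ (mem_restricted.mpr hδ)
      (commute_of_fst_eq_zero (fst_base δ) hε) (rLE_one_of_fst_pos (by simp; omega))
      ((rLE_one_base_iff δ).mpr h1δ) ?_ (rLE_one_of_fst_pos (by simp; omega))
    rw [← base_snd hε, ← map_mul]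
    exact (rLE_one_base_iff _).mpr h1δε

theorem rdpWithOn_rLE (hG : RDPWith (fun a b : G => a * b) 1 (· ≤ ·)) :
    RDPWithOn (restricted G : Set (ZWr G)) (· * ·) 1 rLE := by
  intro a₁ a₂ b₁ b₂ ha₁ ha₂ hb₁ hb₂ h₁ h₂ h₃ h₄ h
  rcases lt_trichotomy a₁.1 b₁.1 with hlt | heq | hgt
  · exact hasRieszDecompOn_of_fst_lt h ha₁ ha₂ hb₁ h₁ h₄ hlt
  · exact hasRieszDecompOn_of_fst_eq hG h ha₁ ha₂ hb₁ hb₂ h₁ h₂ h₃ h₄ heq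
  · exact (hasRieszDecompOn_of_fst_lt h.symm hb₁ hb₂ ha₁ h₃ h₂ hgt).transpose

end Forward

section Backward

variable {G : Type*} [CommGroup G] [PartialOrder G] [MulLeftMono G]

lemma one_le_apply_zero_of_mulSingle_eq_mul {g : G} {φ ψ : ℤ → G} (hφ : TopLE 1 φ)
    (hψ : TopLE 1 ψ) (h : Pi.mulSingle 0 g = φ * ψ) : 1 ≤ φ 0 :=
  one_le_of_topLE_of_mul_eqOn_Ioi hφ hψ fun i hi => by
    simpa [Pi.mulSingle_eq_of_ne hi.ne'] using (congrFun h i).symm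

theorem rdpWith_of_rdpWithOn_rLE (hW : RDPWithOn (restricted G : Set (ZWr G)) (· * ·) 1 rLE) :
    RDPWith (fun a b : G => a * b) 1 (· ≤ ·) := by
  intro a₁ a₂ b₁ b₂ h₁ h₂ h₃ h₄ h
  let ι (g : G) : ZWr G := base G (Pi.mulSingle 0 g)
  have hι : ∀ g : G, 1 ≤ g → rLE (1 : ZWr G) (ι g) := fun g hg =>
    (rLE_one_base_iff _).mpr (topLE_one_mulSingle hg 0)
  obtain ⟨c₁₁, c₁₂, c₂₁, c₂₂, -, -, -, -, p₁₁, p₁₂, p₂₁, p₂₂, e₁, e₂, e₃, e₄⟩ :=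
    hW (ι a₁) (ι a₂) (ι b₁) (ι b₂) (mulSingle_mem_finiteMulSupport 0 a₁)
      (mulSingle_mem_finiteMulSupport 0 a₂) (mulSingle_mem_finiteMulSupport 0 b₁)
      (mulSingle_mem_finiteMulSupport 0 b₂) (hι _ h₁) (hι _ h₂) (hι _ h₃) (hι _ h₄)
      (by simp only [ι, ← map_mul, ← Pi.mulSingle_mul, h])
  obtain ⟨z₁₁, z₁₂⟩ := fst_eq_zero_of_mul_fst_eq_zero p₁₁ p₁₂ (congrArg Prod.fst e₁).symm
  obtain ⟨z₂₁, z₂₂⟩ := fst_eq_zero_of_mul_fst_eq_zero p₂₁ p₂₂ (congrArg Prod.fst e₂).symm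
  obtain ⟨φ₁₁, rfl⟩ : ∃ φ, base G φ = c₁₁ := ⟨_, base_snd z₁₁⟩
  obtain ⟨φ₁₂, rfl⟩ : ∃ φ, base G φ = c₁₂ := ⟨_, base_snd z₁₂⟩
  obtain ⟨φ₂₁, rfl⟩ : ∃ φ, base G φ = c₂₁ := ⟨_, base_snd z₂₁⟩
  obtain ⟨φ₂₂, rfl⟩ : ∃ φ, base G φ = c₂₂ := ⟨_, base_snd z₂₂⟩
  simp only [rLE_one_base_iff] at p₁₁ p₁₂ p₂₁ p₂₂
  simp only [ι, ← map_mul, base_injective.eq_iff] at e₁ e₂ e₃ e₄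
  refine ⟨φ₁₁ 0, φ₁₂ 0, φ₂₁ 0, φ₂₂ 0,
    one_le_apply_zero_of_mulSingle_eq_mul p₁₁ p₁₂ e₁,
    one_le_apply_zero_of_mulSingle_eq_mul p₁₂ p₁₁ (e₁.trans (mul_comm _ _)),
    one_le_apply_zero_of_mulSingle_eq_mul p₂₁ p₂₂ e₂,
    one_le_apply_zero_of_mulSingle_eq_mul p₂₂ p₂₁ (e₂.trans (mul_comm _ _)), ?_, ?_, ?_, ?_⟩
  · simpa using congrFun e₁ 0
  · simpa using congrFun e₂ 0
  · simpa using congrFun e₃ 0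
  · simpa using congrFun e₄ 0

end Backward

section Mirror

variable {G : Type*}

def mirror (p : ZWr G) : ZWr G := (p.1, fun i => p.2 (-i - p.1))

lemma mirror_mirror (p : ZWr G) : mirror (mirror p) = p :=
  Prod.ext rfl (funext fun i => by
    change p.2 (-(-i - p.1) - p.1) = p.2 i
    rw [show -(-i - p.1) - p.1 = i by ring])

lemma mirror_mul [CommGroup G] (p q : ZWr G) : mirror (p * q) = mirror q * mirror p :=
  Prod.ext (add_comm _ _) (funext fun i => by
    change p.2 (-i - (p.1 + q.1)) * q.2 (-i - (p.1 + q.1) + p.1) =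
      q.2 (-i - q.1) * p.2 (-(i + q.1) - p.1)
    rw [mul_comm, show -i - (p.1 + q.1) + p.1 = -i - q.1 by ring,
      show -i - (p.1 + q.1) = -(i + q.1) - p.1 by ring])

variable [Group G]

lemma mirror_mem {p : ZWr G} (hp : p ∈ restricted G) : mirror p ∈ restricted G :=
  comp_mem_finiteMulSupport hp (f := fun i => -i - p.1) fun _ _ h => by simpa using h

lemma mirror_eq_one_iff {p : ZWr G} : mirror p = 1 ↔ p = 1 :=
  ⟨fun h => by rw [← mirror_mirror p, h]; rfl, by rintro rfl; rfl⟩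

variable [PartialOrder G]

lemma rPos_mirror_iff (p : ZWr G) : rPos (mirror p) ↔ lPos p := by
  refine or_congr Iff.rfl (and_congr_right fun _ => ⟨?_, ?_⟩)
  · rintro ⟨j, hj, h⟩
    refine ⟨-j - p.1, hj, fun i hi => ?_⟩
    have : p.2 (-(-i - p.1) - p.1) = 1 := h (-i - p.1) (by omega)
    rwa [show -(-i - p.1) - p.1 = i by ring] at this
  · rintro ⟨j, hj, h⟩
    refine ⟨-j - p.1, ?_, fun i hi => h _ (by omega)⟩
    change 1 < p.2 (-(-j - p.1) - p.1)
    rwa [show -(-j - p.1) - p.1 = j by ring]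

lemma rLE_one_mirror_iff (p : ZWr G) : rLE (1 : ZWr G) (mirror p) ↔ lLE (1 : ZWr G) p := by
  rw [rLE_one_iff, lLE_one_iff, mirror_eq_one_iff, rPos_mirror_iff]

lemma lLE_one_mirror_iff (p : ZWr G) : lLE (1 : ZWr G) (mirror p) ↔ rLE (1 : ZWr G) p := by
  rw [← rLE_one_mirror_iff, mirror_mirror]

end Mirror

theorem rdpWithOn_lLE_iff_rLE {G : Type*} [CommGroup G] [PartialOrder G] :
    RDPWithOn (restricted G : Set (ZWr G)) (· * ·) 1 lLE ↔
      RDPWithOn (restricted G : Set (ZWr G)) (· * ·) 1 rLE := by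
  constructor <;> refine RDPWithOn.of_antihom mirror mirror mirror_mirror (fun _ => mirror_mem)
    (fun _ => mirror_mem) mirror_mul mirror_mul (fun p hp => ?_) (fun p hp => ?_)
  exacts [(lLE_one_mirror_iff p).mpr hp, (rLE_one_mirror_iff p).mpr hp,
    (rLE_one_mirror_iff p).mpr hp, (lLE_one_mirror_iff p).mpr hp]

end ZWr

theorem zwr_rdp_iff_rdp_general {G : Type*} [CommGroup G] [PartialOrder G]
    [CovariantClass G G (· * ·) (· ≤ ·)]
    (hdir : ∀ x y : G, ∃ z : G, x ≤ z ∧ y ≤ z) :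
    (RDPWithOn (zwrS G) (fun p q : ℤ × (ℤ → G) => zwrMul p q) (zwrOne G) rLE ↔
      RDPWith (fun a b : G => a * b) 1 (· ≤ ·)) ∧
    (RDPWithOn (zwrS G) (fun p q : ℤ × (ℤ → G) => zwrMul p q) (zwrOne G) lLE ↔
      RDPWith (fun a b : G => a * b) 1 (· ≤ ·)) := by
  have : IsDirectedOrder G := ⟨hdir⟩
  have hR : RDPWithOn (ZWr.restricted G : Set (ZWr G)) (· * ·) 1 rLE ↔
      RDPWith (fun a b : G => a * b) 1 (· ≤ ·) :=
    ⟨ZWr.rdpWith_of_rdpWithOn_rLE, ZWr.rdpWithOn_rLE⟩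
  exact ⟨hR, ZWr.rdpWithOn_lLE_iff_rLE.trans hR⟩

/-- For a directed non-atomistic Abelian po-group `G`, the right
wreath product `ℤ →wr G` satisfies RDP iff the left wreath product `ℤ ←wr G`
satisfies RDP iff `G` satisfies RDP. -/
theorem zwr_rdp_iff_rdp {G : Type*} [CommGroup G] [PartialOrder G]
    [CovariantClass G G (· * ·) (· ≤ ·)]
    [CovariantClass G G (Function.swap (· * ·)) (· ≤ ·)]
    (hdir : ∀ x y : G, ∃ z : G, x ≤ z ∧ y ≤ z)
    (hna : ∀ g : G, 1 < g → ∃ g' : G, 1 < g' ∧ g' < g) :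
    (RDPWithOn (zwrS G) (fun p q : ℤ × (ℤ → G) => zwrMul p q) (zwrOne G) rLE ↔
      RDPWith (fun a b : G => a * b) 1 (· ≤ ·)) ∧
    (RDPWithOn (zwrS G) (fun p q : ℤ × (ℤ → G) => zwrMul p q) (zwrOne G) lLE ↔
      RDPWith (fun a b : G => a * b) 1 (· ≤ ·)) :=
  zwr_rdp_iff_rdp_general hdir
end

section
/- Let G be a nontrivial directed po-group. If the right wreath product ℤ ⃗wr G is an ℓ-group (i.e., its partial order is a lattice), then G is linearly ordered. -/
private lemma rLE_zz {G : Type*} [Group G] [PartialOrder G]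
    [CovariantClass G G (· * ·) (· ≤ ·)] (α β : ℤ → G) :
    rLE ((0:ℤ), α) ((0:ℤ), β) ↔
      α = β ∨ ∃ j : ℤ, α j < β j ∧ ∀ i : ℤ, j < i → α i = β i := by
  unfold rLE rPos zwrMul zwrInv
  simp [Prod.ext_iff, inv_mul_eq_one, lt_inv_mul_iff_lt]

private lemma rLE_fst_le {G : Type*} [Group G] [PartialOrder G] {p q : ℤ × (ℤ → G)}
    (h : rLE p q) : p.1 ≤ q.1 := by
  rcases h with h | h | h
  · rw [h]
  · simp only [zwrMul, zwrInv] at h; omega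
  · simp only [zwrMul, zwrInv] at h; omega

private lemma oneS (G : Type*) [One G] : ((0:ℤ), fun _ => (1:G)) ∈ zwrS G := by
  have : Function.mulSupport (fun _ : ℤ => (1:G)) ⊆ (∅ : Set ℤ) := by
    intro i hi; exact absurd rfl hi
  exact Set.finite_empty.subset this

private lemma modS {G : Type*} [One G] {σ : ℤ → G} (h : ((0:ℤ), σ) ∈ zwrS G)
    (x : G) (n : ℤ) : ((0:ℤ), fun i => if i = n then x else σ i) ∈ zwrS G := by
  have hfin : (Function.mulSupport σ).Finite := h
  refine (hfin.union (Set.finite_singleton n)).subset ?_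
  intro i hi
  by_cases hc : i = n
  · exact Or.inr (by simp [hc])
  · left
    simp only [Function.mem_mulSupport] at hi ⊢
    simpa [hc] using hi

private lemma one_lt_of_lt_mul' {G : Type*} [Group G] [PartialOrder G]
    [CovariantClass G G (· * ·) (· ≤ ·)] {x y : G} (h : x < x * y) : 1 < y := by
  have := lt_inv_mul_iff_lt.mpr h
  rwa [inv_mul_cancel_left] at this


/-- For a nontrivial directed po-group `G`, if the right wreath
product `ℤ →wr G` is a lattice (every pair of its elements has a least upper
bound and a greatest lower bound in it), then `G` is linearly ordered. -/
theorem linearOrdered_of_zwr_lattice {G : Type*} [Group G] [PartialOrder G]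
    [CovariantClass G G (· * ·) (· ≤ ·)]
    [CovariantClass G G (Function.swap (· * ·)) (· ≤ ·)]
    [Nontrivial G]
    (hdir : ∀ x y : G, ∃ z : G, x ≤ z ∧ y ≤ z)
    (hlat : ∀ p ∈ zwrS G, ∀ q ∈ zwrS G,
      (∃ s ∈ zwrS G, rLE p s ∧ rLE q s ∧
        ∀ z ∈ zwrS G, rLE p z → rLE q z → rLE s z) ∧
      (∃ m ∈ zwrS G, rLE m p ∧ rLE m q ∧
        ∀ z ∈ zwrS G, rLE z p → rLE z q → rLE z m)) :
    ∀ a b : G, a ≤ b ∨ b ≤ a := by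
  intro a b
  by_contra hab
  push_neg at hab
  obtain ⟨hab1, hab2⟩ := hab
  have hu1 : ¬ (1:G) ≤ a⁻¹ * b := by
    intro h
    exact hab1 (by simpa using mul_le_mul_right h a)
  have hu2 : ¬ a⁻¹ * b ≤ (1:G) := by
    intro h
    exact hab2 (by simpa using mul_le_mul_right h a)
  set u : G := a⁻¹ * b with hudef
  have hune : u ≠ 1 := fun h => hu2 (le_of_eq h)
  obtain ⟨g, hgu, hg1⟩ := hdir u 1
  have hg : (1:G) < g := by
    rcases lt_or_eq_of_le hg1 with h | h
    · exact h
    · exfalso; rw [← h] at hgu; exact hu2 hgu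
  have hdS : ((0:ℤ), fun i : ℤ => if i = 0 then u else 1) ∈ zwrS G := modS (oneS G) u 0
  obtain ⟨⟨s, hsS, hes, hds, hmin⟩, -⟩ :=
    hlat ((0:ℤ), fun _ => (1:G)) (oneS G) ((0:ℤ), fun i : ℤ => if i = 0 then u else 1) hdS
  obtain ⟨n, σ⟩ := s
  -- upper bound with g at index 1
  have hub1S : ((0:ℤ), fun i : ℤ => if i = 1 then g else 1) ∈ zwrS G := modS (oneS G) g 1
  have he_ub1 : rLE ((0:ℤ), fun _ => (1:G)) ((0:ℤ), fun i : ℤ => if i = 1 then g else 1) := by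
    rw [rLE_zz]
    exact Or.inr ⟨1, by simpa using hg, fun i hi => by simp [show i ≠ 1 by omega]⟩
  have hd_ub1 : rLE ((0:ℤ), fun i : ℤ => if i = 0 then u else 1)
      ((0:ℤ), fun i : ℤ => if i = 1 then g else 1) := by
    rw [rLE_zz]
    refine Or.inr ⟨1, by simpa using hg, fun i hi => ?_⟩
    simp [show i ≠ 0 by omega, show i ≠ 1 by omega]
  have hsub1 : rLE (n, σ) ((0:ℤ), fun i : ℤ => if i = 1 then g else 1) :=
    hmin _ hub1S he_ub1 hd_ub1
  have hn1 : (0:ℤ) ≤ n := rLE_fst_le hes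
  have hn2 : n ≤ (0:ℤ) := rLE_fst_le hsub1
  have hn0 : n = 0 := le_antisymm hn2 hn1
  subst hn0
  rw [rLE_zz] at hes hds hsub1
  by_cases hAex : ∃ j : ℤ, 2 ≤ j ∧ σ j ≠ 1
  · -- Case A : some index ≥ 2 in the support of σ
    obtain ⟨j, hj2, hjne⟩ := hAex
    rcases hes with h | ⟨m, hm, hma⟩
    · exact hjne (congrFun h j).symm
    · have hm1 : (1:G) < σ m := hm
      have hma' : ∀ i, m < i → σ i = 1 := fun i hi => (hma i hi).symm
      have hjm : j ≤ m := by
        by_contra hc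
        exact hjne (hma' j (by omega))
      rcases hsub1 with h | ⟨k, hk, hka⟩
      · have h2 := congrFun h m
        rw [if_neg (show m ≠ 1 by omega)] at h2
        exact absurd h2 (ne_of_gt hm1)
      · have hmk : m ≤ k := by
          by_contra hc
          have h2 := hka m (by omega)
          rw [if_neg (show m ≠ 1 by omega)] at h2
          exact absurd h2 (ne_of_gt hm1)
        have hkm : k ≤ m := by
          by_contra hc
          rw [hma' k (by omega), if_neg (show k ≠ 1 by omega)] at hk
          exact lt_irrefl _ hk
        have hkmeq : k = m := le_antisymm hkm hmk
        subst hkmeq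
        rw [if_neg (show k ≠ 1 by omega)] at hk
        exact absurd hk (lt_asymm hm1)
  · push_neg at hAex
    by_cases hB : σ 1 = 1
    · -- Case C : σ is trivial at all indices ≥ 1
      have hC : ∀ i : ℤ, 1 ≤ i → σ i = 1 := by
        intro i hi
        rcases eq_or_lt_of_le hi with h | h
        · rw [← h]; exact hB
        · exact hAex i (by omega)
      rcases hes with h | ⟨m, hm, hma⟩
      · -- σ is identically 1
        have hσ1 : ∀ i, σ i = 1 := fun i => (congrFun h i).symm
        rcases hds with h' | ⟨k, hk, hka⟩
        · have h2 := congrFun h' 0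
          simp [hσ1 0] at h2
          exact hune h2
        · by_cases hk0 : k = 0
          · subst hk0
            simp only [if_pos rfl, hσ1 0] at hk
            exact hu2 (le_of_lt hk)
          · simp [hk0, hσ1 k] at hk
      · have hm1 : (1:G) < σ m := hm
        have hma' : ∀ i, m < i → σ i = 1 := fun i hi => (hma i hi).symm
        have hm0 : m ≤ 0 := by
          by_contra hc
          exact absurd (hC m (by omega)) (ne_of_gt hm1)
        rcases hds with h' | ⟨k, hk, hka⟩
        · have h2 : σ m = if m = 0 then u else 1 := (congrFun h' m).symm
          by_cases hm00 : m = 0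
          · subst hm00
            rw [if_pos rfl] at h2
            rw [h2] at hm1
            exact hu1 (le_of_lt hm1)
          · rw [if_neg hm00] at h2
            exact absurd h2 (ne_of_gt hm1)
        · have hka' : ∀ i, k < i → σ i = if i = 0 then u else 1 :=
            fun i hi => (hka i hi).symm
          have hk0 : k = 0 := by
            rcases lt_trichotomy k 0 with h0 | h0 | h0
            · exfalso
              have hσ0u : σ 0 = u := by simpa using hka' 0 h0
              by_cases hm00 : m = 0
              · subst hm00
                rw [hσ0u] at hm1
                exact hu1 (le_of_lt hm1)
              · have : σ 0 = 1 := hma' 0 (by omega)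
                rw [hσ0u] at this
                exact hune this
            · exact h0
            · exfalso
              have h2 : σ k = 1 := hC k (by omega)
              simp [show k ≠ 0 by omega, h2] at hk
          subst hk0
          have hk' : u < σ 0 := by simpa using hk
          have hm00 : m = 0 := by
            by_contra hc
            have : σ 0 = 1 := hma' 0 (by omega)
            rw [this] at hk'
            exact hu2 (le_of_lt hk')
          subst hm00
          -- σ 0 > 1, u < σ 0 : build the smaller upper bound modified at -1
          have hτS : ((0:ℤ), fun i : ℤ => if i = -1 then σ (-1) * u else σ i) ∈ zwrS G :=
            modS hsS (σ (-1) * u) (-1)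
          have heτ : rLE ((0:ℤ), fun _ => (1:G))
              ((0:ℤ), fun i : ℤ => if i = -1 then σ (-1) * u else σ i) := by
            rw [rLE_zz]
            refine Or.inr ⟨0, by simpa using hm1, fun i hi => ?_⟩
            simp [show i ≠ -1 by omega, hC i (by omega)]
          have hdτ : rLE ((0:ℤ), fun i : ℤ => if i = 0 then u else 1)
              ((0:ℤ), fun i : ℤ => if i = -1 then σ (-1) * u else σ i) := by
            rw [rLE_zz]
            refine Or.inr ⟨0, by simpa using hk', fun i hi => ?_⟩
            simp [show i ≠ -1 by omega, show i ≠ 0 by omega, hC i (by omega)]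
          have hsτ := hmin _ hτS heτ hdτ
          rw [rLE_zz] at hsτ
          rcases hsτ with h | ⟨k', hk'', hka''⟩
          · have h2 := congrFun h (-1)
            simp only [if_pos rfl] at h2
            exact hune (left_eq_mul.mp h2)
          · by_cases hk'1 : k' = -1
            · subst hk'1
              simp only [if_pos rfl] at hk''
              exact hu1 (le_of_lt (one_lt_of_lt_mul' hk''))
            · simp [hk'1] at hk''
    · -- Case B : σ 1 ≠ 1 (and σ trivial beyond 1)
      rcases hes with h | ⟨m, hm, hma⟩
      · exact hB (congrFun h 1).symm
      · have hm1 : (1:G) < σ m := hm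
        have hma' : ∀ i, m < i → σ i = 1 := fun i hi => (hma i hi).symm
        have hmeq : m = 1 := by
          rcases lt_trichotomy m 1 with h' | h' | h'
          · exact absurd (hma' 1 h') hB
          · exact h'
          · exact absurd (hAex m (by omega)) (ne_of_gt hm1)
        subst hmeq
        have hτS : ((0:ℤ), fun i : ℤ => if i = 0 then σ 0 * u else σ i) ∈ zwrS G :=
          modS hsS (σ 0 * u) 0
        have heτ : rLE ((0:ℤ), fun _ => (1:G))
            ((0:ℤ), fun i : ℤ => if i = 0 then σ 0 * u else σ i) := by
          rw [rLE_zz]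
          refine Or.inr ⟨1, by simpa using hm1, fun i hi => ?_⟩
          simp [show i ≠ 0 by omega, hAex i (by omega)]
        have hdτ : rLE ((0:ℤ), fun i : ℤ => if i = 0 then u else 1)
            ((0:ℤ), fun i : ℤ => if i = 0 then σ 0 * u else σ i) := by
          rw [rLE_zz]
          refine Or.inr ⟨1, by simpa using hm1, fun i hi => ?_⟩
          simp [show i ≠ 0 by omega, hAex i (by omega)]
        have hsτ := hmin _ hτS heτ hdτ
        rw [rLE_zz] at hsτ
        rcases hsτ with h | ⟨k, hk, hka⟩
        · have h2 := congrFun h 0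
          simp only [if_pos rfl] at h2
          exact hune (left_eq_mul.mp h2)
        · by_cases hk0 : k = 0
          · subst hk0
            simp only [if_pos rfl] at hk
            exact hu1 (le_of_lt (one_lt_of_lt_mul' hk))
          · simp [hk0] at hk
end

section
/- Let A be a linearly ordered group and G an ℓ-group. Then the unrestricted Wreath product A Wr G is an ℓ-group, that is, its partial order is a lattice. -/
/-- For a linearly ordered group `A` and an ℓ-group `G`, the
unrestricted Wreath product `A Wr G` is a lattice: every pair of elements has
a least upper bound and a greatest lower bound with respect to its order. -/
theorem wreath_lattice {A G : Type*} [Group A] [LinearOrder A]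
    [CovariantClass A A (· * ·) (· ≤ ·)]
    [CovariantClass A A (Function.swap (· * ·)) (· ≤ ·)]
    [Group G] [Lattice G]
    [CovariantClass G G (· * ·) (· ≤ ·)]
    [CovariantClass G G (Function.swap (· * ·)) (· ≤ ·)] :
    ∀ p q : A × (A → G),
      (∃ s : A × (A → G), wrLE p s ∧ wrLE q s ∧
        ∀ z : A × (A → G), wrLE p z → wrLE q z → wrLE s z) ∧
      (∃ m : A × (A → G), wrLE m p ∧ wrLE m q ∧
        ∀ z : A × (A → G), wrLE z p → wrLE z q → wrLE z m) := by
  intro p q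
  constructor
  · rcases lt_trichotomy p.1 q.1 with h | h | h
    · exact ⟨q, Or.inl h, Or.inr ⟨rfl, fun a => le_rfl⟩, fun z _ hq => hq⟩
    · refine ⟨(p.1, fun a => p.2 a ⊔ q.2 a), Or.inr ⟨rfl, fun a => le_sup_left⟩,
        Or.inr ⟨h.symm, fun a => le_sup_right⟩, ?_⟩
      intro z hp hq
      rcases hp with hp | ⟨hp1, hp2⟩
      · exact Or.inl hp
      · rcases hq with hq | ⟨hq1, hq2⟩
        · exact absurd (hp1 ▸ hq) (by simp [h])
        · exact Or.inr ⟨hp1, fun a => sup_le (hp2 a) (hq2 a)⟩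
    · exact ⟨p, Or.inr ⟨rfl, fun a => le_rfl⟩, Or.inl h, fun z hp _ => hp⟩
  · rcases lt_trichotomy p.1 q.1 with h | h | h
    · exact ⟨p, Or.inr ⟨rfl, fun a => le_rfl⟩, Or.inl h, fun z hp _ => hp⟩
    · refine ⟨(p.1, fun a => p.2 a ⊓ q.2 a), Or.inr ⟨rfl, fun a => inf_le_left⟩,
        Or.inr ⟨h, fun a => inf_le_right⟩, ?_⟩
      intro z hp hq
      rcases hp with hp | ⟨hp1, hp2⟩
      · exact Or.inl hp
      · rcases hq with hq | ⟨hq1, hq2⟩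
        · exact absurd (hp1 ▸ h ▸ hq) (lt_irrefl _)
        · exact Or.inr ⟨hp1, fun a => le_inf (hp2 a) (hq2 a)⟩
    · exact ⟨q, Or.inl h, Or.inr ⟨rfl, fun a => le_rfl⟩, fun z _ hq => hq⟩
end

section
/- Let G₁ and G₂ be po-groups. If the lexicographic product G₁ ×lex G₂ satisfies RDP (respectively RDP₁, respectively RDP₂), then G₂ satisfies RDP (respectively RDP₁, respectively RDP₂). -/
lemma eq_one_of_mul_eq_one_of_one_le {G : Type*} [Group G] [PartialOrder G]
    [CovariantClass G G (· * ·) (· ≤ ·)] {x y : G}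
    (hx : 1 ≤ x) (hy : 1 ≤ y) (h : x * y = 1) : x = 1 ∧ y = 1 := by
  have h1 : x ≤ 1 := by
    calc x = x * 1 := (mul_one x).symm
    _ ≤ x * y := mul_le_mul_right hy x
    _ = 1 := h
  have hx1 : x = 1 := le_antisymm h1 hx
  refine ⟨hx1, ?_⟩
  rw [hx1, one_mul] at h
  exact h

lemma lex_pos_extract {G₁ G₂ : Type*} [PartialOrder G₁] [One G₁] [LE G₂] [One G₂]
    {c : G₁ × G₂} (h : lexLE (1 : G₁ × G₂) c) : 1 ≤ c.1 ∧ (c.1 = 1 → 1 ≤ c.2) := by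
  rcases h with h | ⟨h1, h2⟩
  · have h' : (1 : G₁) < c.1 := h
    exact ⟨le_of_lt h', fun he => absurd (he ▸ h') (lt_irrefl _)⟩
  · have h1' : (1 : G₁) = c.1 := h1
    have h2' : (1 : G₂) ≤ c.2 := h2
    exact ⟨le_of_eq h1', fun _ => h2'⟩

lemma lex_one_le {G₁ G₂ : Type*} [PartialOrder G₁] [One G₁] [LE G₂] [One G₂] {a : G₂}
    (ha : 1 ≤ a) : lexLE (1 : G₁ × G₂) ((1 : G₁), a) := Or.inr ⟨rfl, ha⟩

/-- For po-groups `G₁`, `G₂`, if the lexicographic product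
`G₁ ×lex G₂` satisfies RDP (resp. RDP₁, resp. RDP₂), then so does `G₂`. -/
theorem rdp_of_lex_rdp {G₁ G₂ : Type*} [Group G₁] [PartialOrder G₁]
    [CovariantClass G₁ G₁ (· * ·) (· ≤ ·)]
    [CovariantClass G₁ G₁ (Function.swap (· * ·)) (· ≤ ·)]
    [Group G₂] [PartialOrder G₂]
    [CovariantClass G₂ G₂ (· * ·) (· ≤ ·)]
    [CovariantClass G₂ G₂ (Function.swap (· * ·)) (· ≤ ·)] :
    (RDPWith (fun p q : G₁ × G₂ => p * q) 1 lexLE →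
      RDPWith (fun a b : G₂ => a * b) 1 (· ≤ ·)) ∧
    (RDP1With (fun p q : G₁ × G₂ => p * q) 1 lexLE →
      RDP1With (fun a b : G₂ => a * b) 1 (· ≤ ·)) ∧
    (RDP2With (fun p q : G₁ × G₂ => p * q) 1 lexLE →
      RDP2With (fun a b : G₂ => a * b) 1 (· ≤ ·)) := by
  refine ⟨?_, ?_, ?_⟩
  ·
    intro h a₁ a₂ b₁ b₂ ha₁ ha₂ hb₁ hb₂ heq
    obtain ⟨c₁₁, c₁₂, c₂₁, c₂₂, p₁₁, p₁₂, p₂₁, p₂₂, e₁, e₂, e₃, e₄⟩ :=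
      h (1, a₁) (1, a₂) (1, b₁) (1, b₂) (lex_one_le ha₁) (lex_one_le ha₂)
        (lex_one_le hb₁) (lex_one_le hb₂)
        (by simp [Prod.ext_iff, heq])
    obtain ⟨q₁₁, r₁₁⟩ := lex_pos_extract p₁₁
    obtain ⟨q₁₂, r₁₂⟩ := lex_pos_extract p₁₂
    obtain ⟨q₂₁, r₂₁⟩ := lex_pos_extract p₂₁
    obtain ⟨q₂₂, r₂₂⟩ := lex_pos_extract p₂₂
    have f₁ : c₁₁.1 * c₁₂.1 = 1 := (congrArg Prod.fst e₁).symm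
    have f₂ : c₂₁.1 * c₂₂.1 = 1 := (congrArg Prod.fst e₂).symm
    obtain ⟨g₁₁, g₁₂⟩ := eq_one_of_mul_eq_one_of_one_le q₁₁ q₁₂ f₁
    obtain ⟨g₂₁, g₂₂⟩ := eq_one_of_mul_eq_one_of_one_le q₂₁ q₂₂ f₂
    have s₁ : a₁ = c₁₁.2 * c₁₂.2 := congrArg Prod.snd e₁
    have s₂ : a₂ = c₂₁.2 * c₂₂.2 := congrArg Prod.snd e₂
    have s₃ : b₁ = c₁₁.2 * c₂₁.2 := congrArg Prod.snd e₃
    have s₄ : b₂ = c₁₂.2 * c₂₂.2 := congrArg Prod.snd e₄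
    refine ⟨c₁₁.2, c₁₂.2, c₂₁.2, c₂₂.2, r₁₁ g₁₁, r₁₂ g₁₂, r₂₁ g₂₁, r₂₂ g₂₂,
      s₁, s₂, s₃, s₄⟩
  ·
    intro h a₁ a₂ b₁ b₂ ha₁ ha₂ hb₁ hb₂ heq
    obtain ⟨c₁₁, c₁₂, c₂₁, c₂₂, p₁₁, p₁₂, p₂₁, p₂₂, e₁, e₂, e₃, e₄, hcomm⟩ :=
      h (1, a₁) (1, a₂) (1, b₁) (1, b₂) (lex_one_le ha₁) (lex_one_le ha₂)
        (lex_one_le hb₁) (lex_one_le hb₂)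
        (by simp [Prod.ext_iff, heq])
    obtain ⟨q₁₁, r₁₁⟩ := lex_pos_extract p₁₁
    obtain ⟨q₁₂, r₁₂⟩ := lex_pos_extract p₁₂
    obtain ⟨q₂₁, r₂₁⟩ := lex_pos_extract p₂₁
    obtain ⟨q₂₂, r₂₂⟩ := lex_pos_extract p₂₂
    have f₁ : c₁₁.1 * c₁₂.1 = 1 := (congrArg Prod.fst e₁).symm
    have f₂ : c₂₁.1 * c₂₂.1 = 1 := (congrArg Prod.fst e₂).symm
    obtain ⟨g₁₁, g₁₂⟩ := eq_one_of_mul_eq_one_of_one_le q₁₁ q₁₂ f₁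
    obtain ⟨g₂₁, g₂₂⟩ := eq_one_of_mul_eq_one_of_one_le q₂₁ q₂₂ f₂
    have s₁ : a₁ = c₁₁.2 * c₁₂.2 := congrArg Prod.snd e₁
    have s₂ : a₂ = c₂₁.2 * c₂₂.2 := congrArg Prod.snd e₂
    have s₃ : b₁ = c₁₁.2 * c₂₁.2 := congrArg Prod.snd e₃
    have s₄ : b₂ = c₁₂.2 * c₂₂.2 := congrArg Prod.snd e₄
    refine ⟨c₁₁.2, c₁₂.2, c₂₁.2, c₂₂.2, r₁₁ g₁₁, r₁₂ g₁₂, r₂₁ g₂₁, r₂₂ g₂₂,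
      s₁, s₂, s₃, s₄ , ?_⟩
    intro x y hx hxc hy hyc
    have hcxy := hcomm (1, x) (1, y) (lex_one_le hx) (Or.inr ⟨g₁₂.symm, hxc⟩)
      (lex_one_le hy) (Or.inr ⟨g₂₁.symm, hyc⟩)
    exact congrArg Prod.snd hcxy
  ·
    intro h a₁ a₂ b₁ b₂ ha₁ ha₂ hb₁ hb₂ heq
    obtain ⟨c₁₁, c₁₂, c₂₁, c₂₂, p₁₁, p₁₂, p₂₁, p₂₂, e₁, e₂, e₃, e₄, hinf⟩ :=
      h (1, a₁) (1, a₂) (1, b₁) (1, b₂) (lex_one_le ha₁) (lex_one_le ha₂)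
        (lex_one_le hb₁) (lex_one_le hb₂)
        (by simp [Prod.ext_iff, heq])
    obtain ⟨q₁₁, r₁₁⟩ := lex_pos_extract p₁₁
    obtain ⟨q₁₂, r₁₂⟩ := lex_pos_extract p₁₂
    obtain ⟨q₂₁, r₂₁⟩ := lex_pos_extract p₂₁
    obtain ⟨q₂₂, r₂₂⟩ := lex_pos_extract p₂₂
    have f₁ : c₁₁.1 * c₁₂.1 = 1 := (congrArg Prod.fst e₁).symm
    have f₂ : c₂₁.1 * c₂₂.1 = 1 := (congrArg Prod.fst e₂).symm
    obtain ⟨g₁₁, g₁₂⟩ := eq_one_of_mul_eq_one_of_one_le q₁₁ q₁₂ f₁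
    obtain ⟨g₂₁, g₂₂⟩ := eq_one_of_mul_eq_one_of_one_le q₂₁ q₂₂ f₂
    have s₁ : a₁ = c₁₁.2 * c₁₂.2 := congrArg Prod.snd e₁
    have s₂ : a₂ = c₂₁.2 * c₂₂.2 := congrArg Prod.snd e₂
    have s₃ : b₁ = c₁₁.2 * c₂₁.2 := congrArg Prod.snd e₃
    have s₄ : b₂ = c₁₂.2 * c₂₂.2 := congrArg Prod.snd e₄
    refine ⟨c₁₁.2, c₁₂.2, c₂₁.2, c₂₂.2, r₁₁ g₁₁, r₁₂ g₁₂, r₂₁ g₂₁, r₂₂ g₂₂,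
      s₁, s₂, s₃, s₄ , ?_⟩
    intro z hz₁ hz₂
    have hz := hinf (1, z) (Or.inr ⟨g₁₂.symm, hz₁⟩) (Or.inr ⟨g₂₁.symm, hz₂⟩)
    rcases hz with hz | ⟨_, hz⟩
    · exact absurd hz (lt_irrefl _)
    · exact hz
end

section
/- Let G be a po-group and let x¹ = (0,⟨x¹_i⟩), x² = (0,⟨x²_i⟩), y¹ = (0,⟨y¹_i⟩), y² = (0,⟨y²_i⟩) be positive elements of the right wreath product ℤ ⃗wr G such that x¹_i = x²_i = y¹_i = y²_i = e for all i ≠ 0 and x¹·x² = y¹·y². If (0,⟨c^{11}_i⟩), (0,⟨c^{12}_i⟩), (0,⟨c^{21}_i⟩), (0,⟨c^{22}_i⟩) are positive elements of ℤ ⃗wr G with x¹ = c¹¹·c¹², x² = c²¹·c²², y¹ = c¹¹·c²¹, y² = c¹²·c²², then c^{jk}_i = e for every index i > 0 and all j,k ∈ {1,2}. -/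
/-! A positive element `(0, a)` of `ℤ →wr G` is trivial or has a greatest index `j` with
`a j ≠ 1`, and then `a j > 1`. Where `a i * b i = 1`, `a i = 1 ↔ b i = 1`; so if the top indices
of two positive factors both lay in a range where their product is trivial, each would bound the
other, and at the common top index `1 < a j * b j = 1`. Hence both factors are trivial on that
range; for `x¹ = c¹¹ c¹²` and `x² = c²¹ c²²` it contains every `i > 0`. -/

theorem le_of_mul_eq_one_of_ne_one {M : Type*} [MulOneClass M] {a b : ℤ → M} {n j k : ℤ}
    (hab : ∀ i, n < i → a i * b i = 1) (hnj : n < j) (hj : a j ≠ 1)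
    (hk : ∀ i, k < i → b i = 1) : j ≤ k := by
  by_contra! hkj
  exact hj (by simpa [hk j hkj] using hab j hnj)

theorem zwrMul_zero_snd_eq_one {M : Type*} [Mul M] [One M] {a b c : ℤ → M}
    (h : ((0 : ℤ), a) = zwrMul (0, b) (0, c)) {i : ℤ} (hi : a i = 1) : b i * c i = 1 := by
  simpa [zwrMul, hi, eq_comm] using congrArg (fun p => p.2 i) h

section WreathPositivity

variable {G : Type*} [Group G] [PartialOrder G]

theorem zwrOne_rLE_zero_iff (a : ℤ → G) :
    rLE (zwrOne G) (0, a) ↔ (∀ i, a i = 1) ∨ ∃ j, 1 < a j ∧ ∀ i, j < i → a i = 1 := by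
  simp [rLE, rPos, zwrMul, zwrInv, zwrOne, Prod.ext_iff, funext_iff, eq_comm]

variable [CovariantClass G G (· * ·) (· ≤ ·)]

theorem eq_one_of_zwrOne_rLE_of_mul_eq_one {a b : ℤ → G} {n : ℤ}
    (ha : rLE (zwrOne G) (0, a)) (hb : rLE (zwrOne G) (0, b))
    (hab : ∀ i, n < i → a i * b i = 1) :
    ∀ i, n < i → a i = 1 ∧ b i = 1 := by
  have hba : ∀ i, n < i → b i * a i = 1 := fun i hi => mul_eq_one_comm.mp (hab i hi)
  suffices ha' : ∀ i, n < i → a i = 1 from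
    fun i hi => ⟨ha' i hi, by simpa [ha' i hi] using hab i hi⟩
  rcases (zwrOne_rLE_zero_iff a).mp ha with ha | ⟨j, haj, ha_top⟩
  · exact fun i _ => ha i
  rcases (zwrOne_rLE_zero_iff b).mp hb with hb | ⟨k, hbk, hb_top⟩
  · exact fun i hi => by simpa [hb i] using hab i hi
  intro i hi
  by_cases hnj : n < j
  · have hjk := le_of_mul_eq_one_of_ne_one hab hnj haj.ne' hb_top
    have hkj := le_of_mul_eq_one_of_ne_one hba (hnj.trans_le hjk) hbk.ne' ha_top
    obtain rfl : j = k := le_antisymm hjk hkj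
    exact absurd (hab j hnj) <| ne_of_gt <|
      calc (1 : G) < a j := haj
        _ ≤ a j * b j := le_mul_of_one_le_right' hbk.le
  · exact ha_top i (by omega)

end WreathPositivity

theorem zwr_decomposition_vanishes_above_zero_general {G : Type*} [Group G]
    [PartialOrder G]
    [CovariantClass G G (· * ·) (· ≤ ·)]
    (x₁ x₂ c₁₁ c₁₂ c₂₁ c₂₂ : ℤ → G)
    (hx₁ : ∀ i : ℤ, i ≠ 0 → x₁ i = 1) (hx₂ : ∀ i : ℤ, i ≠ 0 → x₂ i = 1)
    (hc₁₁pos : rLE (zwrOne G) ((0 : ℤ), c₁₁)) (hc₁₂pos : rLE (zwrOne G) ((0 : ℤ), c₁₂))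
    (hc₂₁pos : rLE (zwrOne G) ((0 : ℤ), c₂₁)) (hc₂₂pos : rLE (zwrOne G) ((0 : ℤ), c₂₂))
    (h₁ : ((0 : ℤ), x₁) = zwrMul ((0 : ℤ), c₁₁) ((0 : ℤ), c₁₂))
    (h₂ : ((0 : ℤ), x₂) = zwrMul ((0 : ℤ), c₂₁) ((0 : ℤ), c₂₂)) :
    ∀ i : ℤ, 0 < i → c₁₁ i = 1 ∧ c₁₂ i = 1 ∧ c₂₁ i = 1 ∧ c₂₂ i = 1 := by
  have k₁ := eq_one_of_zwrOne_rLE_of_mul_eq_one hc₁₁pos hc₁₂pos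
    fun i hi => zwrMul_zero_snd_eq_one h₁ (hx₁ i hi.ne')
  have k₂ := eq_one_of_zwrOne_rLE_of_mul_eq_one hc₂₁pos hc₂₂pos
    fun i hi => zwrMul_zero_snd_eq_one h₂ (hx₂ i hi.ne')
  exact fun i hi => ⟨(k₁ i hi).1, (k₁ i hi).2, (k₂ i hi).1, (k₂ i hi).2⟩

/-- In the right wreath product `ℤ →wr G` over a po-group `G`,
if positive elements `(0,⟨x¹⟩), (0,⟨x²⟩), (0,⟨y¹⟩), (0,⟨y²⟩)` supported at the
single index `0` satisfy `x¹·x² = y¹·y²` and positive elements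
`(0,⟨c^{jk}⟩)` form an RDP decomposition of them, then `c^{jk}_i = 1` for
every index `i > 0`. -/
theorem zwr_decomposition_vanishes_above_zero {G : Type*} [Group G]
    [PartialOrder G]
    [CovariantClass G G (· * ·) (· ≤ ·)]
    [CovariantClass G G (Function.swap (· * ·)) (· ≤ ·)]
    (x₁ x₂ y₁ y₂ c₁₁ c₁₂ c₂₁ c₂₂ : ℤ → G)
    (hx₁ : ∀ i : ℤ, i ≠ 0 → x₁ i = 1) (hx₂ : ∀ i : ℤ, i ≠ 0 → x₂ i = 1)
    (hy₁ : ∀ i : ℤ, i ≠ 0 → y₁ i = 1) (hy₂ : ∀ i : ℤ, i ≠ 0 → y₂ i = 1)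
    (hx₁pos : rLE (zwrOne G) ((0 : ℤ), x₁)) (hx₂pos : rLE (zwrOne G) ((0 : ℤ), x₂))
    (hy₁pos : rLE (zwrOne G) ((0 : ℤ), y₁)) (hy₂pos : rLE (zwrOne G) ((0 : ℤ), y₂))
    (heq : zwrMul ((0 : ℤ), x₁) ((0 : ℤ), x₂) = zwrMul ((0 : ℤ), y₁) ((0 : ℤ), y₂))
    (hc₁₁fin : (Function.mulSupport c₁₁).Finite)
    (hc₁₂fin : (Function.mulSupport c₁₂).Finite)
    (hc₂₁fin : (Function.mulSupport c₂₁).Finite)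
    (hc₂₂fin : (Function.mulSupport c₂₂).Finite)
    (hc₁₁pos : rLE (zwrOne G) ((0 : ℤ), c₁₁)) (hc₁₂pos : rLE (zwrOne G) ((0 : ℤ), c₁₂))
    (hc₂₁pos : rLE (zwrOne G) ((0 : ℤ), c₂₁)) (hc₂₂pos : rLE (zwrOne G) ((0 : ℤ), c₂₂))
    (h₁ : ((0 : ℤ), x₁) = zwrMul ((0 : ℤ), c₁₁) ((0 : ℤ), c₁₂))
    (h₂ : ((0 : ℤ), x₂) = zwrMul ((0 : ℤ), c₂₁) ((0 : ℤ), c₂₂))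
    (h₃ : ((0 : ℤ), y₁) = zwrMul ((0 : ℤ), c₁₁) ((0 : ℤ), c₂₁))
    (h₄ : ((0 : ℤ), y₂) = zwrMul ((0 : ℤ), c₁₂) ((0 : ℤ), c₂₂)) :
    ∀ i : ℤ, 0 < i → c₁₁ i = 1 ∧ c₁₂ i = 1 ∧ c₂₁ i = 1 ∧ c₂₂ i = 1 :=
  zwr_decomposition_vanishes_above_zero_general x₁ x₂ c₁₁ c₁₂ c₂₁ c₂₂ hx₁ hx₂ hc₁₁pos hc₁₂pos
    hc₂₁pos hc₂₂pos h₁ h₂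
end
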